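/- arXiv:0905.2123 — 4 statements merged into one kernel-verified Lean document; each statement's English description precedes it below -/
import Mathlib

section
/- For the two-qubit state σ_AB = (1/4)(I⊗I + Σ_j r_j σ_j⊗σ_j) and local projective measurements along unit vectors n_A, n_B (POVMs (I ± n·σ)/2), the joint outcome distribution is (1+δ)/4, (1−δ)/4, (1−δ)/4, (1+δ)/4 with δ = Σ_j r_j n_{Aj} n_{Bj}, the resulting classical mutual information is 1 − H{(1+δ)/2, (1−δ)/2}, and |δ| ≤ max{|r₁|,|r₂|,|r₃|}; hence the maximum over local projective measurements is I^p_max = 1 − H{(1+r_m)/2, (1−r_m)/2} with r_m = max_j |r_j|. -/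
open Matrix BigOperators
open scoped Kronecker Classical ComplexOrder

noncomputable section

/-- Shannon entropy (base 2, with 0 log 0 = 0). -/
def shannon {ι : Type*} [Fintype ι] (p : ι → ℝ) : ℝ :=
  -∑ i, p i * Real.logb 2 (p i)

/-- Classical mutual information of a joint distribution. -/
def cMutualInfo {ι κ : Type*} [Fintype ι] [Fintype κ] (p : ι → κ → ℝ) : ℝ :=
  shannon (fun i => ∑ s, p i s) + shannon (fun s => ∑ i, p i s)
    - shannon (fun x : ι × κ => p x.1 x.2)

/-- Von Neumann entropy (base 2) via eigenvalues of a Hermitian matrix. -/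
def vnEntropy {n : Type*} [Fintype n] [DecidableEq n] (ρ : Matrix n n ℂ) : ℝ :=
  if h : ρ.IsHermitian then shannon h.eigenvalues else 0

/-- Partial trace over the second (right) factor. -/
def ptraceR {a b : Type*} [Fintype a] [Fintype b] (ρ : Matrix (a × b) (a × b) ℂ) :
    Matrix a a ℂ := fun i j => ∑ k, ρ (i, k) (j, k)

/-- Partial trace over the first (left) factor. -/
def ptraceL {a b : Type*} [Fintype a] [Fintype b] (ρ : Matrix (a × b) (a × b) ℂ) :
    Matrix b b ℂ := fun i j => ∑ k, ρ (k, i) (k, j)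

def IsDensityMatrix {n : Type*} [Fintype n] (ρ : Matrix n n ℂ) : Prop :=
  ρ.PosSemidef ∧ ρ.trace = 1

def IsPOVM {n ι : Type*} [Fintype n] [Fintype ι] [DecidableEq n]
    (M : ι → Matrix n n ℂ) : Prop :=
  (∀ i, (M i).PosSemidef) ∧ ∑ i, M i = 1

/-- Quantum mutual information S(A:B). -/
def qMutualInfo {a b : Type*} [Fintype a] [Fintype b] [DecidableEq a] [DecidableEq b]
    (ρ : Matrix (a × b) (a × b) ℂ) : ℝ :=
  vnEntropy (ptraceR ρ) + vnEntropy (ptraceL ρ) - vnEntropy ρ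

/-- Joint outcome probability of local measurements. -/
def measProb {a b ι κ : Type*} [Fintype a] [Fintype b] [Fintype ι] [Fintype κ]
    (ρ : Matrix (a × b) (a × b) ℂ) (M : ι → Matrix a a ℂ) (N : κ → Matrix b b ℂ)
    (i : ι) (s : κ) : ℝ := ((M i ⊗ₖ N s) * ρ).trace.re
/-- The three Pauli matrices. -/
def pauli : Fin 3 → Matrix (Fin 2) (Fin 2) ℂ :=
  ![!![0, 1; 1, 0], !![0, -Complex.I; Complex.I, 0], !![1, 0; 0, -1]]

/-- Binary Shannon entropy H{p, 1-p} (base 2). -/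
def H2 (p : ℝ) : ℝ := shannon ![p, 1 - p]

/-- The two-outcome projective measurement (I ± n·σ)/2 along a direction n. -/
def projMeas (nv : Fin 3 → ℝ) : Fin 2 → Matrix (Fin 2) (Fin 2) ℂ := fun k =>
  (1 / 2 : ℝ) • ((1 : Matrix (Fin 2) (Fin 2) ℂ) +
    (if k = 0 then (1 : ℝ) else -1) • ∑ j, nv j • pauli j)

/-! Only the correlation tensor is seen by local Pauli measurements: since tr σ_j = 0 and
tr (σ_i σ_j) = 2 [i = j], the outcome distribution is (1 ± δ)/4, with uniform marginals, so the
mutual information is 1 − H((1 + δ)/2). The bound |r_j a_j b_j| ≤ r_m (a_j² + b_j²)/2 gives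
|δ| ≤ r_m, positivity of σ on the Bell states gives r_m ≤ 1, and H((1 + x)/2) decreases in |x| on
[-1, 1]; measuring both qubits along the axis of the largest |r_j| attains δ = ±r_m. -/

def outcomeSign (k : Fin 2) : ℝ := if k = 0 then 1 else -1

@[simp] lemma outcomeSign_zero : outcomeSign 0 = 1 := rfl

@[simp] lemma outcomeSign_one : outcomeSign 1 = -1 := rfl

def bellDiagonal (r : Fin 3 → ℝ) : Matrix (Fin 2 × Fin 2) (Fin 2 × Fin 2) ℂ :=
  (1 / 4 : ℝ) • (1 + ∑ j, r j • (pauli j ⊗ₖ pauli j))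

lemma trace_pauli (j : Fin 3) : (pauli j).trace = 0 := by
  fin_cases j <;> simp [pauli, trace_fin_two]

lemma trace_pauli_mul_pauli (i j : Fin 3) :
    (pauli i * pauli j).trace = if i = j then 2 else 0 := by
  fin_cases i <;> fin_cases j <;> simp [pauli, trace_fin_two] <;> norm_num

lemma trace_projMeas (n : Fin 3 → ℝ) (k : Fin 2) : (projMeas n k).trace = 1 := by
  simp only [projMeas, trace_smul, trace_add, trace_one, trace_sum, trace_pauli, smul_zero,
    Finset.sum_const_zero]
  norm_num

lemma trace_projMeas_mul_pauli (n : Fin 3 → ℝ) (k : Fin 2) (j : Fin 3) :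
    (projMeas n k * pauli j).trace = ((outcomeSign k * n j : ℝ) : ℂ) := by
  simp only [projMeas, Matrix.smul_mul, add_mul, one_mul, Finset.sum_mul, trace_smul, trace_add,
    trace_sum, trace_pauli, trace_pauli_mul_pauli, smul_ite, smul_zero, Finset.sum_ite_eq',
    Finset.mem_univ, if_true]
  simp only [outcomeSign, Complex.real_smul]
  push_cast
  ring

lemma measProb_bellDiagonal (r nA nB : Fin 3 → ℝ) (k l : Fin 2) :
    measProb (bellDiagonal r) (projMeas nA) (projMeas nB) k l =
      (1 + outcomeSign k * outcomeSign l * ∑ j, r j * nA j * nB j) / 4 := by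
  rw [measProb, bellDiagonal, Matrix.mul_smul, trace_smul, mul_add, mul_one, trace_add,
    Finset.mul_sum]
  simp only [Matrix.mul_smul, trace_smul, trace_sum, ← mul_kronecker_mul, trace_kronecker,
    trace_projMeas, trace_projMeas_mul_pauli]
  simp only [Complex.real_smul, ← Complex.ofReal_mul, ← Complex.ofReal_sum, ← Complex.ofReal_one,
    ← Complex.ofReal_add, Complex.ofReal_re, Fin.sum_univ_three]
  ring

lemma div_two_mul_logb_div_two (x : ℝ) :
    x / 2 * Real.logb 2 (x / 2) = x / 2 * Real.logb 2 x - x / 2 := by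
  rcases eq_or_ne x 0 with rfl | hx
  · simp
  · rw [Real.logb_div hx two_ne_zero, Real.logb_self_eq_one one_lt_two]
    ring

lemma shannon_uniform_fin_two : shannon (fun _ : Fin 2 => (1 / 2 : ℝ)) = 1 := by
  simp [shannon, Real.logb_inv]

lemma cMutualInfo_correlated (δ : ℝ) :
    cMutualInfo (fun k l : Fin 2 => (1 + outcomeSign k * outcomeSign l * δ) / 4) =
      1 - H2 ((1 + δ) / 2) := by
  have hrow : ∀ a : Fin 2, ∑ b, (1 + outcomeSign a * outcomeSign b * δ) / 4 = 1 / 2 := by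
    intro a; fin_cases a <;> simp <;> ring
  have hcol : ∀ b : Fin 2, ∑ a, (1 + outcomeSign a * outcomeSign b * δ) / 4 = 1 / 2 := by
    intro b; fin_cases b <;> simp <;> ring
  have hjoint : shannon (fun x : Fin 2 × Fin 2 => (1 + outcomeSign x.1 * outcomeSign x.2 * δ) / 4)
      = 1 + H2 ((1 + δ) / 2) := by
    have hp := div_two_mul_logb_div_two ((1 + δ) / 2)
    have hq := div_two_mul_logb_div_two ((1 - δ) / 2)
    simp only [shannon, H2, Fintype.sum_prod_type, Fin.sum_univ_two, outcomeSign_zero,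
      outcomeSign_one, mul_one, mul_neg, neg_mul, one_mul, ← sub_eq_add_neg, sub_neg_eq_add,
      cons_val_zero, cons_val_one]
    rw [show (1 + δ) / 4 = (1 + δ) / 2 / 2 by ring, show (1 - δ) / 4 = (1 - δ) / 2 / 2 by ring,
      show 1 - (1 + δ) / 2 = (1 - δ) / 2 by ring, hp, hq]
    ring
  simp only [cMutualInfo, hrow, hcol, shannon_uniform_fin_two, hjoint]
  ring

lemma H2_eq_binEntropy_div_log_two (p : ℝ) : H2 p = Real.binEntropy p / Real.log 2 := by
  simp [H2, shannon, Real.binEntropy, Real.logb, Real.log_inv]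
  ring

lemma H2_one_add_abs_div_two (x : ℝ) : H2 ((1 + |x|) / 2) = H2 ((1 + x) / 2) := by
  rcases abs_choice x with h | h
  · rw [h]
  · rw [h, H2_eq_binEntropy_div_log_two, H2_eq_binEntropy_div_log_two,
      show (1 + -x) / 2 = 1 - (1 + x) / 2 by ring, Real.binEntropy_one_sub]

lemma H2_one_add_div_two_le {x y : ℝ} (hxy : |x| ≤ y) (hy : y ≤ 1) :
    H2 ((1 + y) / 2) ≤ H2 ((1 + x) / 2) := by
  rw [← H2_one_add_abs_div_two x, H2_eq_binEntropy_div_log_two, H2_eq_binEntropy_div_log_two]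
  have hx := abs_nonneg x
  gcongr ?_ / _
  exact Real.binEntropy_strictAntiOn.antitoneOn ⟨by linarith, by linarith⟩
    ⟨by linarith, by linarith⟩ (by linarith)

lemma abs_sum_mul_mul_le {ι : Type*} [Fintype ι] {r a b : ι → ℝ} {M : ℝ}
    (hr : ∀ j, |r j| ≤ M) (ha : ∑ j, a j ^ 2 = 1) (hb : ∑ j, b j ^ 2 = 1) :
    |∑ j, r j * a j * b j| ≤ M := by
  have hterm : ∀ j, |r j * a j * b j| ≤ M * ((a j ^ 2 + b j ^ 2) / 2) := by
    intro j
    have hab : |a j * b j| ≤ (a j ^ 2 + b j ^ 2) / 2 := by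
      rw [abs_le]
      constructor <;> nlinarith [sq_nonneg (a j + b j), sq_nonneg (a j - b j)]
    rw [mul_assoc, abs_mul]
    exact mul_le_mul (hr j) hab (abs_nonneg _) ((abs_nonneg _).trans (hr j))
  calc |∑ j, r j * a j * b j| ≤ ∑ j, |r j * a j * b j| := Finset.abs_sum_le_sum_abs _ _
    _ ≤ ∑ j, M * ((a j ^ 2 + b j ^ 2) / 2) := Finset.sum_le_sum fun j _ => hterm j
    _ = M := by rw [← Finset.mul_sum, ← Finset.sum_div, Finset.sum_add_distrib, ha, hb]; ring

lemma abs_le_max_abs_fin_three (r : Fin 3 → ℝ) (j : Fin 3) :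
    |r j| ≤ max |r 0| (max |r 1| |r 2|) := by
  fin_cases j <;> simp

lemma exists_max_abs_fin_three_eq (r : Fin 3 → ℝ) :
    ∃ j, max |r 0| (max |r 1| |r 2|) = |r j| := by
  rcases max_choice |r 0| (max |r 1| |r 2|) with h | h
  · exact ⟨0, h⟩
  rcases max_choice |r 1| |r 2| with h' | h'
  · exact ⟨1, h.trans h'⟩
  · exact ⟨2, h.trans h'⟩

lemma abs_le_one_of_posSemidef_bellDiagonal {r : Fin 3 → ℝ} (hr : (bellDiagonal r).PosSemidef)
    (j : Fin 3) : |r j| ≤ 1 := by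
  -- Test against the Bell states |00⟩ ± |11⟩, |01⟩ ± |10⟩ (as 2 × 2 coefficient arrays): they are
  -- the eigenvectors of `bellDiagonal r`, and their eigenvalues sum pairwise to (1 ± r j) / 2.
  have h := fun (v : Fin 2 × Fin 2 → ℂ) => hr.dotProduct_mulVec_nonneg v
  have h1 := h (fun p => !![1, 0; 0, 1] p.1 p.2)
  have h2 := h (fun p => !![1, 0; 0, -1] p.1 p.2)
  have h3 := h (fun p => !![0, 1; 1, 0] p.1 p.2)
  have h4 := h (fun p => !![0, 1; -1, 0] p.1 p.2)
  simp only [Complex.le_def] at h1 h2 h3 h4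
  simp only [Complex.zero_re, dotProduct, of_apply, cons_val', cons_val_fin_one, Pi.star_apply,
    RCLike.star_def, mulVec, bellDiagonal, one_div, pauli, Fin.sum_univ_three, Fin.isValue,
    cons_val_zero, cons_val_one, cons_val, Matrix.smul_apply, Matrix.add_apply, one_apply,
    kroneckerMap_apply, Complex.real_smul, smul_add, smul_ite, Complex.ofReal_inv,
    Complex.ofReal_ofNat, mul_one, smul_zero, Fintype.sum_prod_type, Fin.sum_univ_two, mul_zero,
    add_zero, zero_add, Prod.mk.injEq, and_true, zero_ne_one, and_false, ↓reduceIte, mul_neg,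
    one_ne_zero, map_one, neg_mul, Complex.I_mul_I, neg_neg, one_mul, map_zero, zero_mul,
    neg_zero, Complex.add_re, Complex.inv_re, Complex.re_ofNat, Complex.normSq_ofNat,
    div_self_mul_self', Complex.mul_re, Complex.ofReal_re, Complex.inv_im, Complex.im_ofNat,
    zero_div, Complex.ofReal_im, sub_zero, Complex.neg_re, Complex.zero_im, Complex.add_im,
    Complex.mul_im, Complex.neg_im, neg_add_rev, map_neg, nonneg_add_self_iff] at h1 h2 h3 h4
  rw [abs_le]
  fin_cases j <;> constructor <;> simp <;> linarith

lemma cMutualInfo_measProb_bellDiagonal (r nA nB : Fin 3 → ℝ) :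
    cMutualInfo (measProb (bellDiagonal r) (projMeas nA) (projMeas nB)) =
      1 - H2 ((1 + ∑ j, r j * nA j * nB j) / 2) := by
  rw [show measProb (bellDiagonal r) (projMeas nA) (projMeas nB) = _ from
    funext₂ (measProb_bellDiagonal r nA nB)]
  exact cMutualInfo_correlated _

/-- measuring σ = (1/4)(I⊗I + Σ_j r_j σ_j⊗σ_j) with local
projective measurements (I ± n_A·σ)/2, (I ± n_B·σ)/2 gives the outcome
distribution (1 ± δ)/4 with δ = Σ_j r_j n_{Aj} n_{Bj}, classical mutual
information 1 − H{(1+δ)/2,(1−δ)/2}, and |δ| ≤ r_m := max_j |r_j|; the maximum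
over such local projective measurements is I^p_max = 1 − H{(1+r_m)/2,(1−r_m)/2}. -/
theorem stmt10 (r : Fin 3 → ℝ)
    (σ : Matrix ((Fin 2) × (Fin 2)) ((Fin 2) × (Fin 2)) ℂ)
    (hσ : σ = (1 / 4 : ℝ) • ((1 : Matrix ((Fin 2) × (Fin 2)) ((Fin 2) × (Fin 2)) ℂ) +
        ∑ j : Fin 3, r j • (pauli j ⊗ₖ pauli j)))
    (hds : σ.PosSemidef)
    (rm : ℝ) (hrm : rm = max |r 0| (max |r 1| |r 2|)) :
    (∀ (nA nB : Fin 3 → ℝ), ∑ j, (nA j) ^ 2 = 1 → ∑ j, (nB j) ^ 2 = 1 →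
      ∀ δ, δ = ∑ j, r j * nA j * nB j →
        (∀ k l, measProb σ (projMeas nA) (projMeas nB) k l =
            (1 + (if k = 0 then (1:ℝ) else -1) * (if l = 0 then (1:ℝ) else -1) * δ) / 4) ∧
        cMutualInfo (measProb σ (projMeas nA) (projMeas nB)) = 1 - H2 ((1 + δ) / 2) ∧
        |δ| ≤ rm ∧
        cMutualInfo (measProb σ (projMeas nA) (projMeas nB)) ≤ 1 - H2 ((1 + rm) / 2)) ∧
    (∃ nA nB : Fin 3 → ℝ, ∑ j, (nA j) ^ 2 = 1 ∧ ∑ j, (nB j) ^ 2 = 1 ∧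
        cMutualInfo (measProb σ (projMeas nA) (projMeas nB)) = 1 - H2 ((1 + rm) / 2)) := by
  obtain rfl : σ = bellDiagonal r := hσ
  have hr_one : ∀ j, |r j| ≤ 1 := abs_le_one_of_posSemidef_bellDiagonal hds
  have hr_rm : ∀ j, |r j| ≤ rm := hrm ▸ abs_le_max_abs_fin_three r
  obtain ⟨m, hm⟩ := exists_max_abs_fin_three_eq r
  have hrm_one : rm ≤ 1 := hrm ▸ hm ▸ hr_one m
  refine ⟨?_, ?_⟩
  · rintro nA nB hA hB δ rfl
    have hδ : |∑ j, r j * nA j * nB j| ≤ rm := abs_sum_mul_mul_le hr_rm hA hB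
    refine ⟨measProb_bellDiagonal r nA nB, cMutualInfo_measProb_bellDiagonal r nA nB, hδ, ?_⟩
    rw [cMutualInfo_measProb_bellDiagonal]
    linarith [H2_one_add_div_two_le hδ hrm_one]
  · have hunit : ∑ j, (Pi.single m 1 : Fin 3 → ℝ) j ^ 2 = 1 := by simp [Pi.single_apply]
    refine ⟨Pi.single m 1, Pi.single m 1, hunit, hunit, ?_⟩
    rw [cMutualInfo_measProb_bellDiagonal, hrm, hm, H2_one_add_abs_div_two]
    simp [Pi.single_apply]
end
end

section
/- If ρ_AB = Σ_i p_i |i⟩_A⟨i| ⊗ ρ_i^B with {|i⟩} an orthonormal basis of A, then the maximal classical mutual information over all local POVM measurements can be achieved with Alice projecting onto {|i⟩_A}: for any rank-one POVMs by Alice and Bob, the resulting classical mutual information is at most that obtained when Alice first projects onto {|i⟩} (data processing: the outcome of any other Alice POVM is a stochastic post-processing of i, independent of Bob's outcome). -/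
open Matrix BigOperators
open scoped Kronecker Classical ComplexOrder

noncomputable section

/-- Orthonormal completeness: the rank-one projectors onto the family sum to
the identity (so the family is an orthonormal basis). -/
def IsONBasis {n ι : Type*} [Fintype n] [Fintype ι] [DecidableEq n] (v : ι → n → ℂ) : Prop :=
  (∀ i j, ∑ x, star (v i x) * v j x = if i = j then 1 else 0) ∧
  ∑ i, Matrix.vecMulVec (v i) (star (v i)) = 1

/-- A rank-one POVM given by (not necessarily normalized) vectors |K_j⟩ with
Σ_j |K_j⟩⟨K_j| = I. -/
def IsRankOnePOVM {n ι : Type*} [Fintype n] [Fintype ι] [DecidableEq n]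
    (K : ι → n → ℂ) : Prop :=
  ∑ j, Matrix.vecMulVec (K j) (star (K j)) = 1

/-! Write `q i s = p i ⟨L_s|ρ_i|L_s⟩` for the joint outcome distribution when Alice projects
onto the basis `e` and Bob measures a rank-one POVM `L`. For a rank-one POVM `K` on Alice's
side the outcome distribution is `r j s = ∑ i, |⟨K_j|e_i⟩|² q i s`, and the weights
`|⟨K_j|e_i⟩|²` form a stochastic matrix (its columns sum to `⟨e_i|∑ j, |K_j⟩⟨K_j| |e_i⟩ = 1`),
so `r` is `q` with Alice's outcome sent through a classical channel. Writing the mutual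
information as a relative entropy `∑ r log (r / (r_A r_B))` and applying the log-sum inequality
to each `r j s` gives the data processing inequality `I(r) ≤ I(q)`. -/

open Real

theorem mul_log_div_sum_le_sum_mul_log_div {ι : Type*} [Fintype ι] (a b : ι → ℝ)
    (ha : ∀ i, 0 ≤ a i) (hb : ∀ i, 0 ≤ b i) (hab : ∀ i, b i = 0 → a i = 0) :
    (∑ i, a i) * log ((∑ i, a i) / ∑ i, b i) ≤ ∑ i, a i * log (a i / b i) := by
  rcases (Finset.sum_nonneg fun i _ => hb i).eq_or_lt with hB | hB
  · have hb0 : ∀ i, b i = 0 := fun i =>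
      (Finset.sum_eq_zero_iff_of_nonneg fun i _ => hb i).mp hB.symm i (Finset.mem_univ i)
    simp [hab _ (hb0 _)]
  set B := ∑ i, b i
  have hweights : ∀ i, b i / B * (a i / b i) = a i / B := fun i => by
    rcases (hb i).eq_or_lt with h | h
    · simp [← h, hab i h.symm]
    · field_simp
  have jensen := convexOn_mul_log.map_sum_le (t := Finset.univ) (w := fun i => b i / B)
    (p := fun i => a i / b i) (fun i _ => div_nonneg (hb i) hB.le)
    (by rw [← Finset.sum_div, div_self hB.ne']) (fun i _ => div_nonneg (ha i) (hb i))
  simp only [smul_eq_mul, ← mul_assoc, hweights, ← Finset.sum_div] at jensen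
  simpa only [div_mul_eq_mul_div, ← Finset.sum_div, div_le_div_iff_of_pos_right hB] using jensen

theorem mul_log_div_mul_eq {x y z : ℝ} (hx : 0 ≤ x) (hxy : x ≤ y) (hxz : x ≤ z) :
    x * log (x / (y * z)) = x * log x - x * log y - x * log z := by
  rcases hx.eq_or_lt with rfl | hx
  · simp
  rw [log_div hx.ne' (by nlinarith), log_mul (by linarith) (by linarith)]
  ring

theorem cMutualInfo_eq_sum_mul_log_div {ι κ : Type*} [Fintype ι] [Fintype κ]
    (p : ι → κ → ℝ) (hp : ∀ i s, 0 ≤ p i s) :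
    cMutualInfo p =
      (∑ i, ∑ s, p i s * log (p i s / ((∑ s', p i s') * ∑ i', p i' s))) / log 2 := by
  have hrow : ∀ i s, p i s ≤ ∑ s', p i s' := fun i s =>
    Finset.single_le_sum (fun s _ => hp i s) (Finset.mem_univ s)
  have hcol : ∀ i s, p i s ≤ ∑ i', p i' s := fun i s =>
    Finset.single_le_sum (f := fun i => p i s) (fun i _ => hp i s) (Finset.mem_univ i)
  simp only [mul_log_div_mul_eq (hp _ _) (hrow _ _) (hcol _ _), Finset.sum_sub_distrib,
    ← Finset.sum_mul]
  rw [Finset.sum_comm (f := fun i s => p i s * log (∑ i', p i' s))]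
  simp only [← Finset.sum_mul, cMutualInfo, shannon, logb, Fintype.sum_prod_type,
    mul_div_assoc', ← Finset.sum_div]
  ring

theorem cMutualInfo_stochastic_comp_le {ι η κ : Type*} [Fintype ι] [Fintype η] [Fintype κ]
    (q : ι → κ → ℝ) (hq : ∀ i s, 0 ≤ q i s)
    (c : η → ι → ℝ) (hc : ∀ j i, 0 ≤ c j i) (hc1 : ∀ i, ∑ j, c j i = 1) :
    cMutualInfo (fun j s => ∑ i, c j i * q i s) ≤ cMutualInfo q := by
  set P : ι → ℝ := fun i => ∑ s, q i s
  set Q : κ → ℝ := fun s => ∑ i, q i s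
  have hcol : ∀ s, ∑ j, ∑ i, c j i * q i s = Q s := fun s => by
    rw [Finset.sum_comm]
    exact Finset.sum_congr rfl fun i _ => by rw [← Finset.sum_mul, hc1, one_mul]
  have hrow : ∀ j, ∑ s, ∑ i, c j i * q i s = ∑ i, c j i * P i := fun j => by
    rw [Finset.sum_comm]
    exact Finset.sum_congr rfl fun i _ => (Finset.mul_sum ..).symm
  have hq_le_P : ∀ i s, q i s ≤ P i := fun i s =>
    Finset.single_le_sum (fun s _ => hq i s) (Finset.mem_univ s)
  have hq_le_Q : ∀ i s, q i s ≤ Q s := fun i s =>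
    Finset.single_le_sum (f := fun i => q i s) (fun i _ => hq i s) (Finset.mem_univ i)
  have log_sum : ∀ j s,
      (∑ i, c j i * q i s) * log ((∑ i, c j i * q i s) / ((∑ i, c j i * P i) * Q s)) ≤
        ∑ i, c j i * (q i s * log (q i s / (P i * Q s))) := fun j s => by
    have key := mul_log_div_sum_le_sum_mul_log_div (fun i => c j i * q i s)
      (fun i => c j i * (P i * Q s)) (fun i => mul_nonneg (hc j i) (hq i s))
      (fun i => mul_nonneg (hc j i)
        (mul_nonneg ((hq i s).trans (hq_le_P i s)) ((hq i s).trans (hq_le_Q i s))))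
      (fun i h => by
        rcases mul_eq_zero.mp h with h | h
        · simp [h]
        rcases mul_eq_zero.mp h with h | h
        · simp [le_antisymm (h ▸ hq_le_P i s) (hq i s)]
        · simp [le_antisymm (h ▸ hq_le_Q i s) (hq i s)])
    rw [show ∑ i, c j i * (P i * Q s) = (∑ i, c j i * P i) * Q s by
      simp only [Finset.sum_mul, mul_assoc]] at key
    refine key.trans_eq (Finset.sum_congr rfl fun i _ => ?_)
    rcases eq_or_ne (c j i) 0 with h | h
    · simp [h]
    · rw [mul_div_mul_left _ _ h, mul_assoc]
  have hr : ∀ j s, 0 ≤ ∑ i, c j i * q i s := fun j s =>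
    Finset.sum_nonneg fun i _ => mul_nonneg (hc j i) (hq i s)
  rw [cMutualInfo_eq_sum_mul_log_div _ hr, cMutualInfo_eq_sum_mul_log_div q hq]
  gcongr ?_ / _
  simp only [hrow, hcol]
  calc _ ≤ ∑ j, ∑ s, ∑ i, c j i * (q i s * log (q i s / (P i * Q s))) := by
        gcongr with j _ s _
        exact log_sum j s
    _ = ∑ s, ∑ i, (∑ j, c j i) * (q i s * log (q i s / (P i * Q s))) := by
        rw [Finset.sum_comm]
        simp only [Finset.sum_mul]
        exact Finset.sum_congr rfl fun s _ => Finset.sum_comm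
    _ = ∑ i, ∑ s, q i s * log (q i s / (P i * Q s)) := by
        simp only [hc1, one_mul]
        exact Finset.sum_comm

theorem trace_kronecker_mul_sum_smul_kronecker {a b ι : Type*} [Fintype a] [Fintype b]
    [Fintype ι] (M : Matrix a a ℂ) (N : Matrix b b ℂ) (p : ι → ℝ) (E : ι → Matrix a a ℂ)
    (σ : ι → Matrix b b ℂ) :
    ((M ⊗ₖ N) * ∑ i, p i • (E i ⊗ₖ σ i)).trace =
      ∑ i, (p i : ℂ) * ((M * E i).trace * (N * σ i).trace) := by
  simp only [Matrix.mul_sum, Matrix.trace_sum, Matrix.mul_smul, Matrix.trace_smul,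
    ← Matrix.mul_kronecker_mul, Matrix.trace_kronecker, Complex.real_smul]

theorem trace_vecMulVec_star_mul {n : Type*} [Fintype n] (v : n → ℂ) (A : Matrix n n ℂ) :
    (vecMulVec v (star v) * A).trace = star v ⬝ᵥ (A *ᵥ v) := by
  rw [vecMulVec_mul, trace_vecMulVec, dotProduct_mulVec, dotProduct_comm]

theorem trace_vecMulVec_star_mul_vecMulVec_star {n : Type*} [Fintype n] (v w : n → ℂ) :
    (vecMulVec v (star v) * vecMulVec w (star w)).trace = Complex.normSq (star v ⬝ᵥ w) := by
  rw [trace_vecMulVec_star_mul, vecMulVec_mulVec, Complex.normSq_eq_conj_mul_self,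
    dotProduct_smul, star_dotProduct w v]
  simp [mul_comm]

theorem measProb_sum_smul_kronecker {a b ι η κ : Type*} [Fintype a] [Fintype b] [Fintype ι]
    [Fintype η] [Fintype κ] (p : ι → ℝ) (e : ι → a → ℂ) (ρB : ι → Matrix b b ℂ)
    (v : η → a → ℂ) (w : κ → b → ℂ) (j : η) (s : κ) :
    measProb (∑ i, p i • (vecMulVec (e i) (star (e i)) ⊗ₖ ρB i))
        (fun k => vecMulVec (v k) (star (v k))) (fun t => vecMulVec (w t) (star (w t))) j s =
      ∑ i, Complex.normSq (star (v j) ⬝ᵥ e i) * (p i * (star (w s) ⬝ᵥ (ρB i *ᵥ w s)).re) := by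
  rw [measProb, trace_kronecker_mul_sum_smul_kronecker, Complex.re_sum]
  refine Finset.sum_congr rfl fun i _ => ?_
  rw [trace_vecMulVec_star_mul_vecMulVec_star, trace_vecMulVec_star_mul, ← mul_assoc,
    ← Complex.ofReal_mul, Complex.re_ofReal_mul, mul_comm (p i), mul_assoc]

theorem sum_normSq_star_dotProduct_eq_one {n η : Type*} [Fintype n] [Fintype η] [DecidableEq n]
    {K : η → n → ℂ} (hK : IsRankOnePOVM K) {u : n → ℂ} (hu : star u ⬝ᵥ u = 1) :
    ∑ j, Complex.normSq (star (K j) ⬝ᵥ u) = 1 := by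
  have h := congrArg trace (congrArg (· * vecMulVec u (star u)) hK)
  simp only [Matrix.sum_mul, Matrix.trace_sum, trace_vecMulVec_star_mul_vecMulVec_star, one_mul,
    trace_vecMulVec, dotProduct_comm u, hu] at h
  exact_mod_cast h

theorem stmt15_general {a b ι η κ : Type*} [Fintype a] [Fintype b] [Fintype ι] [Fintype η]
    [Fintype κ] [DecidableEq a] [DecidableEq b]
    (p : ι → ℝ) (hp : ∀ i, 0 ≤ p i)
    (e : ι → a → ℂ) (he : IsONBasis e)
    (ρB : ι → Matrix b b ℂ) (hρB : ∀ i, IsDensityMatrix (ρB i))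
    (ρ : Matrix (a × b) (a × b) ℂ)
    (hρ : ρ = ∑ i, p i • (Matrix.vecMulVec (e i) (star (e i)) ⊗ₖ ρB i))
    (KA : η → a → ℂ) (hKA : IsRankOnePOVM KA)
    (KB : κ → b → ℂ) :
    cMutualInfo (measProb ρ (fun j => Matrix.vecMulVec (KA j) (star (KA j)))
                            (fun s => Matrix.vecMulVec (KB s) (star (KB s)))) ≤
    cMutualInfo (measProb ρ (fun i => Matrix.vecMulVec (e i) (star (e i)))
                            (fun s => Matrix.vecMulVec (KB s) (star (KB s)))) := by
  set q : ι → κ → ℝ := fun i s => p i * (star (KB s) ⬝ᵥ (ρB i *ᵥ KB s)).re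
  have hq : ∀ i s, 0 ≤ q i s := fun i s =>
    mul_nonneg (hp i) (Complex.nonneg_iff.mp ((hρB i).1.dotProduct_mulVec_nonneg (KB s))).1
  have hnormSq : ∀ i i', Complex.normSq (star (e i) ⬝ᵥ e i') = if i = i' then 1 else 0 :=
    fun i i' => by rw [show star (e i) ⬝ᵥ e i' = _ from he.1 i i']; split_ifs <;> simp
  have hproj : measProb ρ (fun i => vecMulVec (e i) (star (e i)))
      (fun s => vecMulVec (KB s) (star (KB s))) = q := by
    funext i s
    simp [hρ, measProb_sum_smul_kronecker, hnormSq, q]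
  have hpovm : measProb ρ (fun j => vecMulVec (KA j) (star (KA j)))
      (fun s => vecMulVec (KB s) (star (KB s))) =
      fun j s => ∑ i, Complex.normSq (star (KA j) ⬝ᵥ e i) * q i s := by
    funext j s
    rw [hρ, measProb_sum_smul_kronecker]
  rw [hproj, hpovm]
  exact cMutualInfo_stochastic_comp_le q hq _ (fun _ _ => Complex.normSq_nonneg _)
    fun i => sum_normSq_star_dotProduct_eq_one hKA ((he.1 i i).trans (if_pos rfl))

/-- for ρ_AB = Σ_i p_i |i⟩_A⟨i| ⊗ ρ_i^B with {|i⟩} an orthonormal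
basis of A, the classical mutual information obtained with any rank-one POVMs of
Alice and Bob is at most the one obtained when Alice instead projects onto the
basis {|i⟩} (data processing); hence Alice's optimal strategy is to project
onto {|i⟩}. -/
theorem stmt15 {a b ι η κ : Type*} [Fintype a] [Fintype b] [Fintype ι] [Fintype η]
    [Fintype κ] [DecidableEq a] [DecidableEq b]
    (p : ι → ℝ) (hp : ∀ i, 0 ≤ p i) (hp1 : ∑ i, p i = 1)
    (e : ι → a → ℂ) (he : IsONBasis e)
    (ρB : ι → Matrix b b ℂ) (hρB : ∀ i, IsDensityMatrix (ρB i))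
    (ρ : Matrix (a × b) (a × b) ℂ)
    (hρ : ρ = ∑ i, p i • (Matrix.vecMulVec (e i) (star (e i)) ⊗ₖ ρB i))
    (KA : η → a → ℂ) (hKA : IsRankOnePOVM KA)
    (KB : κ → b → ℂ) (hKB : IsRankOnePOVM KB) :
    cMutualInfo (measProb ρ (fun j => Matrix.vecMulVec (KA j) (star (KA j)))
                            (fun s => Matrix.vecMulVec (KB s) (star (KB s)))) ≤
    cMutualInfo (measProb ρ (fun i => Matrix.vecMulVec (e i) (star (e i)))
                            (fun s => Matrix.vecMulVec (KB s) (star (KB s)))) :=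
  stmt15_general p hp e he ρB hρB ρ hρ KA hKA KB
end
end

section
/- Suppose Bob performs an arbitrary POVM on B, and Alice performs a projective measurement on A (dimension d_A) in one of two mutually unbiased bases, giving classical mutual informations I₁{A:B} and I₂{A:B} with Bob's outcome. Then I₁{A:B} + I₂{A:B} ≤ log₂ d_A. -/
/-!
Condition on Bob's outcome `s`: Alice is left with the state `σ_s ∝ Tr_B ((1 ⊗ N_s) ρ)`, and each
mutual information is the entropy of Alice's outcome (at most `log d`) minus the average over `s`
of its entropy in the state `σ_s`. By the Maassen–Uffink relation the two conditional entropies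
add up to at least `log d`, whence `I₁ + I₂ ≤ 2 log d - log d`.

Maassen–Uffink is proved by interpolation. For a unitary `U` with entries bounded by `c`,
Hadamard's three-lines theorem gives the Riesz–Thorin bound `‖U a‖_{2/(1-t)} ≤ c^t ‖a‖_{2/(1+t)}`
for `0 ≤ t < 1`. Both sides agree at `t = 0`, so comparing derivatives there yields
`H(|a|²) + H(|U a|²) ≥ -2 log c`; mixed states follow by concavity of the entropy.
-/

open Matrix BigOperators
open scoped Kronecker Classical ComplexOrder

noncomputable section

section Entropy

variable {ι κ : Type*} [Fintype ι] [Fintype κ]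

def entropy (p : ι → ℝ) : ℝ := ∑ i, Real.negMulLog (p i)

def condEntropy (P : ι → κ → ℝ) : ℝ :=
  ∑ s, (∑ i, P i s) * entropy (fun i => P i s / ∑ i', P i' s)

lemma shannon_eq_entropy_div_log_two (p : ι → ℝ) : shannon p = entropy p / Real.log 2 := by
  simp only [shannon, entropy, Real.negMulLog, Real.logb, Finset.sum_div, ← Finset.sum_neg_distrib]
  exact Finset.sum_congr rfl fun i _ => by ring

lemma entropy_eq_negMulLog_sum_add {u : ι → ℝ} (hu : ∀ i, 0 ≤ u i) :
    entropy u = Real.negMulLog (∑ i, u i) + (∑ i, u i) * entropy (fun i => u i / ∑ i', u i') := by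
  set Q := ∑ i, u i
  by_cases hQ : Q = 0
  · have hu0 : ∀ i, u i = 0 := fun i =>
      (Finset.sum_eq_zero_iff_of_nonneg fun j _ => hu j).mp hQ i (Finset.mem_univ i)
    simp [entropy, hu0, hQ]
  · have hsplit : ∀ i, Real.negMulLog (u i)
        = u i / Q * Real.negMulLog Q + Q * Real.negMulLog (u i / Q) := fun i => by
      rw [← Real.negMulLog_mul, mul_div_cancel₀ _ hQ]
    simp only [entropy, hsplit, Finset.sum_add_distrib, ← Finset.sum_mul, ← Finset.mul_sum,
      ← Finset.sum_div]
    rw [show (∑ i, u i) / Q = 1 from div_self hQ, one_mul]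

lemma entropy_uncurry {P : ι → κ → ℝ} (hP : ∀ i s, 0 ≤ P i s) :
    entropy (fun x : ι × κ => P x.1 x.2) = entropy (fun s => ∑ i, P i s) + condEntropy P := by
  rw [entropy, Fintype.sum_prod_type, Finset.sum_comm, entropy, condEntropy,
    ← Finset.sum_add_distrib]
  exact Finset.sum_congr rfl fun s _ => entropy_eq_negMulLog_sum_add fun i => hP i s

lemma cMutualInfo_eq {P : ι → κ → ℝ} (hP : ∀ i s, 0 ≤ P i s) :
    cMutualInfo P = (entropy (fun i => ∑ s, P i s) - condEntropy P) / Real.log 2 := by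
  simp only [cMutualInfo, shannon_eq_entropy_div_log_two, entropy_uncurry hP]
  ring

lemma entropy_le_log_card {p : ι → ℝ} (hp : ∀ i, 0 ≤ p i) (h1 : ∑ i, p i = 1) :
    entropy p ≤ Real.log (Fintype.card ι) := by
  have hn : (0 : ℝ) < Fintype.card ι := by
    have : Nonempty ι := by
      by_contra h
      simp [not_nonempty_iff.mp h] at h1
    exact_mod_cast Fintype.card_pos
  have hJensen := Real.concaveOn_negMulLog.le_map_sum (t := Finset.univ)
    (w := fun _ => (Fintype.card ι : ℝ)⁻¹) (p := p) (fun _ _ => by positivity)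
    (by simp [Finset.card_univ, hn.ne']) (fun i _ => hp i)
  simp only [smul_eq_mul, ← Finset.mul_sum, h1, mul_one, entropy] at hJensen ⊢
  rw [Real.negMulLog, Real.log_inv, neg_mul_neg] at hJensen
  exact le_of_mul_le_mul_left hJensen (inv_pos.mpr hn)

lemma sum_mul_entropy_le_entropy_sum {w : κ → ℝ} (hw : ∀ k, 0 ≤ w k) (hw1 : ∑ k, w k = 1)
    {p : κ → ι → ℝ} (hp : ∀ k i, 0 ≤ p k i) :
    ∑ k, w k * entropy (p k) ≤ entropy (fun i => ∑ k, w k * p k i) := by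
  simp only [entropy, Finset.mul_sum]
  rw [Finset.sum_comm]
  refine Finset.sum_le_sum fun i _ => ?_
  simpa [smul_eq_mul] using Real.concaveOn_negMulLog.le_map_sum (t := Finset.univ) (w := w)
    (p := fun k => p k i) (fun k _ => hw k) hw1 (fun k _ => hp k i)

lemma cMutualInfo_add_cMutualInfo_le {ι₁ ι₂ κ : Type*} [Fintype ι₁] [Fintype ι₂] [Fintype κ]
    {P₁ : ι₁ → κ → ℝ} {P₂ : ι₂ → κ → ℝ} {Q : κ → ℝ} (hP₁ : ∀ i s, 0 ≤ P₁ i s)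
    (hP₂ : ∀ j s, 0 ≤ P₂ j s) (hQ₁ : ∀ s, ∑ i, P₁ i s = Q s) (hQ₂ : ∀ s, ∑ j, P₂ j s = Q s)
    (hQ : ∑ s, Q s = 1) {L : ℝ}
    (hL : ∀ s, Q s ≠ 0 → L ≤ entropy (fun i => P₁ i s / Q s) + entropy (fun j => P₂ j s / Q s)) :
    cMutualInfo P₁ + cMutualInfo P₂ ≤
      (Real.log (Fintype.card ι₁) + Real.log (Fintype.card ι₂) - L) / Real.log 2 := by
  have hA₁ := entropy_le_log_card (p := fun i => ∑ s, P₁ i s)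
    (fun i => Finset.sum_nonneg fun s _ => hP₁ i s) (by rw [Finset.sum_comm]; simp only [hQ₁, hQ])
  have hA₂ := entropy_le_log_card (p := fun j => ∑ s, P₂ j s)
    (fun j => Finset.sum_nonneg fun s _ => hP₂ j s) (by rw [Finset.sum_comm]; simp only [hQ₂, hQ])
  have hcond : L ≤ condEntropy P₁ + condEntropy P₂ := by
    simp only [condEntropy, hQ₁, hQ₂, ← Finset.sum_add_distrib, ← mul_add]
    calc L = ∑ s, Q s * L := by rw [← Finset.sum_mul, hQ, one_mul]
      _ ≤ _ := Finset.sum_le_sum fun s _ => by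
        by_cases hs : Q s = 0
        · simp [hs]
        · exact mul_le_mul_of_nonneg_left (hL s hs) (hQ₁ s ▸ Finset.sum_nonneg fun i _ => hP₁ i s)
  rw [cMutualInfo_eq hP₁, cMutualInfo_eq hP₂, ← add_div]
  gcongr
  linarith

end Entropy

section Interpolation

open Complex.HadamardThreeLines

def phasePow (α : ℝ) (c z : ℂ) : ℂ := c / ‖c‖ * (‖c‖ : ℂ) ^ ((1 + z) * α)

lemma differentiable_phasePow (α : ℝ) (c : ℂ) : Differentiable ℂ (phasePow α c) := by
  by_cases hc : c = 0
  · have : phasePow α c = fun _ => 0 := by ext; simp [phasePow, hc]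
    rw [this]
    exact differentiable_const 0
  · refine (differentiable_const _).mul (Differentiable.const_cpow ?_ (Or.inl ?_))
    · fun_prop
    · exact_mod_cast norm_ne_zero_iff.mpr hc

lemma norm_phasePow {α : ℝ} (hα : 0 < α) (c : ℂ) {z : ℂ} (hz : 0 ≤ z.re) :
    ‖phasePow α c z‖ = ‖c‖ ^ ((1 + z.re) * α) := by
  by_cases hc : c = 0
  · simp [phasePow, hc, Real.zero_rpow (by positivity : (1 + z.re) * α ≠ 0)]
  · have hc' : 0 < ‖c‖ := norm_pos_iff.mpr hc
    rw [phasePow, norm_mul, norm_div, Complex.norm_real, Real.norm_of_nonneg hc'.le,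
      div_self hc'.ne', one_mul, Complex.norm_cpow_eq_rpow_re_of_pos hc']
    simp

lemma phasePow_ofReal {α t : ℝ} (h : (1 + t) * α = 1) (c : ℂ) : phasePow α c t = c := by
  by_cases hc : c = 0
  · simp [phasePow, hc]
  · have : (1 + (t : ℂ)) * α = 1 := by exact_mod_cast h
    rw [phasePow, this, Complex.cpow_one, div_mul_cancel₀]
    exact_mod_cast norm_ne_zero_iff.mpr hc

lemma norm_phasePow_sq_of_re_eq_zero {α : ℝ} (hα : 0 < α) (c : ℂ) {z : ℂ} (hz : z.re = 0) :
    ‖phasePow α c z‖ ^ 2 = ‖c‖ ^ (2 * α) := by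
  rw [norm_phasePow hα c hz.ge, hz, add_zero, one_mul, ← Real.rpow_natCast,
    ← Real.rpow_mul (norm_nonneg c), mul_comm]
  norm_num

lemma norm_phasePow_of_re_eq_one {α : ℝ} (hα : 0 < α) (c : ℂ) {z : ℂ} (hz : z.re = 1) :
    ‖phasePow α c z‖ = ‖c‖ ^ (2 * α) := by
  rw [norm_phasePow hα c (by rw [hz]; norm_num), hz]
  norm_num

lemma norm_phasePow_le {α : ℝ} (hα : 0 < α) (hα1 : α ≤ 1) (c : ℂ) {z : ℂ}
    (hz : z ∈ verticalClosedStrip 0 1) : ‖phasePow α c z‖ ≤ (1 + ‖c‖) ^ (2 : ℝ) := by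
  obtain ⟨hz0, hz1⟩ := hz
  rw [norm_phasePow hα c hz0]
  calc ‖c‖ ^ ((1 + z.re) * α) ≤ (1 + ‖c‖) ^ ((1 + z.re) * α) := by
        gcongr
        linarith [norm_nonneg c]
    _ ≤ (1 + ‖c‖) ^ (2 : ℝ) := by
        apply Real.rpow_le_rpow_of_exponent_le (by linarith [norm_nonneg c])
        nlinarith

variable {ι κ : Type*} [Fintype ι] [Fintype κ]

lemma norm_dotProduct_le (x y : ι → ℂ) : ‖x ⬝ᵥ y‖ ≤ ∑ i, ‖x i‖ * ‖y i‖ :=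
  (norm_sum_le _ _).trans_eq (by simp only [norm_mul])

variable {U : Matrix κ ι ℂ}

lemma norm_dotProduct_mulVec_le_of_isometry
    (hU : ∀ y, ∑ j, ‖(U *ᵥ y) j‖ ^ 2 = ∑ i, ‖y i‖ ^ 2) (x : κ → ℂ) (y : ι → ℂ) :
    ‖x ⬝ᵥ U *ᵥ y‖ ≤ √(∑ j, ‖x j‖ ^ 2) * √(∑ i, ‖y i‖ ^ 2) := by
  rw [← hU y]
  exact (norm_dotProduct_le _ _).trans (Real.sum_mul_le_sqrt_mul_sqrt _ _ _)

lemma norm_dotProduct_mulVec_le_of_norm_le {c : ℝ} (hU : ∀ j i, ‖U j i‖ ≤ c)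
    (x : κ → ℂ) (y : ι → ℂ) :
    ‖x ⬝ᵥ U *ᵥ y‖ ≤ c * (∑ j, ‖x j‖) * ∑ i, ‖y i‖ := by
  have hrow : ∀ j, ‖(U *ᵥ y) j‖ ≤ c * ∑ i, ‖y i‖ := fun j => by
    rw [Finset.mul_sum]
    exact (norm_dotProduct_le (U j) y).trans
      (Finset.sum_le_sum fun i _ => mul_le_mul_of_nonneg_right (hU j i) (norm_nonneg _))
  calc ‖x ⬝ᵥ U *ᵥ y‖ ≤ ∑ j, ‖x j‖ * (c * ∑ i, ‖y i‖) :=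
        (norm_dotProduct_le _ _).trans
          (Finset.sum_le_sum fun j _ => mul_le_mul_of_nonneg_left (hrow j) (norm_nonneg _))
    _ = c * (∑ j, ‖x j‖) * ∑ i, ‖y i‖ := by rw [← Finset.sum_mul]; ring

/-- The Riesz–Thorin family: at `z = α⁻¹ - 1` it is `x ⬝ᵥ U *ᵥ y`, while on `Re z = 0` and on
`Re z = 1` the entries of its two vectors have moduli `|·| ^ α` and `|·| ^ (2 α)`. -/
def interpolant (U : Matrix κ ι ℂ) (α : ℝ) (x : κ → ℂ) (y : ι → ℂ) (z : ℂ) : ℂ :=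
  (fun j => phasePow α (x j) z) ⬝ᵥ U *ᵥ fun i => phasePow α (y i) z

lemma differentiable_interpolant (α : ℝ) (x : κ → ℂ) (y : ι → ℂ) :
    Differentiable ℂ (interpolant U α x y) := by
  unfold interpolant
  simp only [dotProduct, Matrix.mulVec]
  exact Differentiable.fun_sum fun j _ => (differentiable_phasePow _ _).mul
    (Differentiable.fun_sum fun i _ => (differentiable_phasePow _ _).const_mul _)

lemma bddAbove_norm_interpolant {c : ℝ} (hc : 0 ≤ c) (hUc : ∀ j i, ‖U j i‖ ≤ c) {α : ℝ}
    (hα : 0 < α) (hα1 : α ≤ 1) (x : κ → ℂ) (y : ι → ℂ) :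
    BddAbove ((norm ∘ interpolant U α x y) '' verticalClosedStrip 0 1) := by
  refine ⟨c * (∑ j, (1 + ‖x j‖) ^ (2 : ℝ)) * ∑ i, (1 + ‖y i‖) ^ (2 : ℝ), ?_⟩
  rintro _ ⟨z, hz, rfl⟩
  refine (norm_dotProduct_mulVec_le_of_norm_le hUc _ _).trans ?_
  gcongr with j _ i _
  · exact norm_phasePow_le hα hα1 _ hz
  · exact norm_phasePow_le hα hα1 _ hz

/-- Riesz–Thorin interpolation between the `ℓ²→ℓ²` bound `1` and the `ℓ¹→ℓ^∞` bound `c`. -/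
theorem norm_dotProduct_mulVec_le_interp {c : ℝ} (hc : 0 ≤ c) (hUc : ∀ j i, ‖U j i‖ ≤ c)
    (hU : ∀ y, ∑ j, ‖(U *ᵥ y) j‖ ^ 2 = ∑ i, ‖y i‖ ^ 2) (x : κ → ℂ) (y : ι → ℂ)
    {t : ℝ} (ht0 : 0 ≤ t) (ht1 : t ≤ 1) :
    ‖x ⬝ᵥ U *ᵥ y‖ ≤
      c ^ t * ((∑ j, ‖x j‖ ^ (2 / (1 + t))) * ∑ i, ‖y i‖ ^ (2 / (1 + t))) ^ ((1 + t) / 2) := by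
  set α := (1 + t)⁻¹
  have hα : 0 < α := by positivity
  set X := ∑ j, ‖x j‖ ^ (2 * α)
  set Y := ∑ i, ‖y i‖ ^ (2 * α)
  have hedge0 : ∀ z ∈ Complex.re ⁻¹' {0}, ‖interpolant U α x y z‖ ≤ √X * √Y := fun z hz =>
    (norm_dotProduct_mulVec_le_of_isometry hU _ _).trans_eq
      (by simp only [norm_phasePow_sq_of_re_eq_zero hα _ hz, X, Y])
  have hedge1 : ∀ z ∈ Complex.re ⁻¹' {1}, ‖interpolant U α x y z‖ ≤ c * X * Y := fun z hz =>
    (norm_dotProduct_mulVec_le_of_norm_le hUc _ _).trans_eq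
      (by simp only [norm_phasePow_of_re_eq_one hα _ hz, X, Y])
  have h3 := norm_le_interp_of_mem_verticalClosedStrip₀₁' (interpolant U α x y) (z := t)
    ⟨by simpa using ht0, by simpa using ht1⟩ (differentiable_interpolant α x y).diffContOnCl
    (bddAbove_norm_interpolant hc hUc hα (inv_le_one_of_one_le₀ (by linarith)) x y) hedge0 hedge1
  have h1 : (1 + t) * α = 1 := mul_inv_cancel₀ (by linarith)
  simp only [interpolant, phasePow_ofReal h1, Complex.ofReal_re] at h3
  refine h3.trans_eq ?_
  rw [div_eq_mul_inv 2 (1 + t)]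
  change _ = c ^ t * (X * Y) ^ ((1 + t) / 2)
  rw [← Real.sqrt_mul (by positivity), Real.sqrt_eq_rpow, ← Real.rpow_mul (by positivity),
    mul_assoc, Real.mul_rpow hc (by positivity), mul_left_comm,
    ← Real.rpow_add' (by positivity) (by linarith)]
  congr 2
  ring

end Interpolation

section MaassenUffink

lemma HasDerivAt.nonpos_of_isMaxOn_Ico {f : ℝ → ℝ} {f' a b : ℝ} (hf : HasDerivAt f f' a)
    (hab : a < b) (hmax : IsMaxOn f (Set.Ico a b) a) : f' ≤ 0 := by
  have hcone : (1 : ℝ) ∈ posTangentConeAt (Set.Ico a b) a := by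
    rw [one_mem_posTangentConeAt_iff_mem_closure]
    have hsub : Set.Ioo a b ⊆ Set.Ioi a ∩ Set.Ico a b := fun x hx => ⟨hx.1, hx.1.le, hx.2⟩
    refine closure_mono hsub ?_
    rw [closure_Ioo hab.ne]
    exact ⟨le_rfl, hab.le⟩
  simpa using hmax.localize.hasFDerivWithinAt_nonpos hf.hasFDerivAt.hasFDerivWithinAt hcone

lemma hasDerivAt_const_rpow_one {p : ℝ} (hp : 0 ≤ p) :
    HasDerivAt (fun s : ℝ => p ^ s) (-Real.negMulLog p) 1 := by
  rcases hp.eq_or_lt with rfl | hp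
  · refine ((hasDerivAt_const (1 : ℝ) (0 : ℝ)).congr_of_eventuallyEq ?_).congr_deriv (by simp)
    filter_upwards [eventually_ne_nhds one_ne_zero] with s hs
    simp [Real.zero_rpow hs]
  · simpa [Real.negMulLog] using (Real.hasStrictDerivAt_const_rpow hp 1).hasDerivAt

/-- The vector attaining equality in Hölder's inequality `|⟪w, b⟫| ≤ ‖w‖_{q'} ‖b‖_q`. -/
def holderDual {κ : Type*} (q : ℝ) (b : κ → ℂ) (j : κ) : ℂ := star (b j) * (‖b j‖ ^ (q - 2) : ℝ)

lemma norm_holderDual {κ : Type*} {q : ℝ} (hq : 1 < q) (b : κ → ℂ) (j : κ) :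
    ‖holderDual q b j‖ = ‖b j‖ ^ (q - 1) := by
  by_cases hb : b j = 0
  · simp [holderDual, hb, Real.zero_rpow (by linarith : q - 1 ≠ 0)]
  · rw [holderDual, norm_mul, norm_star, Complex.norm_real, Real.norm_of_nonneg (by positivity),
      ← Real.rpow_one_add' (norm_nonneg _) (by linarith)]
    ring_nf

variable {ι κ : Type*} [Fintype ι] [Fintype κ]

lemma hasDerivAt_log_sum_rpow {p : ι → ℝ} (hp : ∀ i, 0 ≤ p i) (h1 : ∑ i, p i = 1) :
    HasDerivAt (fun s : ℝ => Real.log (∑ i, p i ^ s)) (-entropy p) 1 := by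
  have hsum : HasDerivAt (fun s : ℝ => ∑ i, p i ^ s) (-entropy p) 1 := by
    simpa [entropy] using HasDerivAt.fun_sum fun i _ => hasDerivAt_const_rpow_one (hp i)
  simpa [h1] using hsum.log (by simp [h1])

lemma sum_rpow_pos {p : ι → ℝ} (hp : ∀ i, 0 ≤ p i) (h1 : ∑ i, p i = 1) (s : ℝ) :
    0 < ∑ i, p i ^ s := by
  obtain ⟨i, -, hi⟩ := Finset.exists_ne_zero_of_sum_ne_zero (h1 ▸ one_ne_zero)
  exact Finset.sum_pos' (fun j _ => Real.rpow_nonneg (hp j) s)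
    ⟨i, Finset.mem_univ _, Real.rpow_pos_of_pos ((hp i).lt_of_ne' hi) s⟩

lemma holderDual_dotProduct {q : ℝ} (hq : 0 < q) (b : κ → ℂ) :
    holderDual q b ⬝ᵥ b = ((∑ j, ‖b j‖ ^ q : ℝ) : ℂ) := by
  rw [dotProduct, Complex.ofReal_sum]
  refine Finset.sum_congr rfl fun j _ => ?_
  by_cases hb : b j = 0
  · simp [hb, Real.zero_rpow hq.ne']
  · have hb' : 0 < ‖b j‖ := norm_pos_iff.mpr hb
    rw [holderDual, mul_right_comm, Complex.star_def, Complex.conj_mul', ← Complex.ofReal_pow,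
      ← Complex.ofReal_mul, ← Real.rpow_natCast, ← Real.rpow_add hb']
    norm_num

variable {U : Matrix κ ι ℂ}

theorem rpow_sum_norm_mulVec_rpow_le {c : ℝ} (hc : 0 ≤ c) (hUc : ∀ j i, ‖U j i‖ ≤ c)
    (hU : ∀ y, ∑ j, ‖(U *ᵥ y) j‖ ^ 2 = ∑ i, ‖y i‖ ^ 2) (a : ι → ℂ) {t : ℝ}
    (ht0 : 0 ≤ t) (ht1 : t < 1) :
    (∑ j, ‖(U *ᵥ a) j‖ ^ (2 / (1 - t))) ^ ((1 - t) / 2) ≤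
      c ^ t * (∑ i, ‖a i‖ ^ (2 / (1 + t))) ^ ((1 + t) / 2) := by
  set q := 2 / (1 - t)
  set S := ∑ j, ‖(U *ᵥ a) j‖ ^ q
  set S' := ∑ i, ‖a i‖ ^ (2 / (1 + t))
  have hq : 1 < q := by rw [lt_div_iff₀ (by linarith)]; linarith
  have hS : 0 ≤ S := by positivity
  have hS' : 0 ≤ S' := by positivity
  have hdual : ∑ j, ‖holderDual q (U *ᵥ a) j‖ ^ (2 / (1 + t)) = S := by
    refine Finset.sum_congr rfl fun j _ => ?_
    rw [norm_holderDual hq, ← Real.rpow_mul (norm_nonneg _)]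
    congr 1
    have : 1 - t ≠ 0 := by linarith
    simp only [q]
    field_simp
    ring
  have key := norm_dotProduct_mulVec_le_interp hc hUc hU (holderDual q (U *ᵥ a)) a ht0 ht1.le
  rw [holderDual_dotProduct (by linarith), hdual, Complex.norm_real, Real.norm_of_nonneg hS,
    Real.mul_rpow hS hS'] at key
  rcases hS.eq_or_lt with h0 | hpos
  · rw [← h0, Real.zero_rpow (by linarith)]
    positivity
  · have hsplit : S ^ ((1 - t) / 2) * S ^ ((1 + t) / 2) = S := by
      rw [← Real.rpow_add hpos, show (1 - t) / 2 + (1 + t) / 2 = 1 by ring, Real.rpow_one]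
    refine le_of_mul_le_mul_right (a := S ^ ((1 + t) / 2)) ?_ (by positivity)
    calc _ = S := hsplit
      _ ≤ _ := key
      _ = _ := by ring

lemma mul_log_sum_rpow_le {c : ℝ} (hc : 0 < c) (hUc : ∀ j i, ‖U j i‖ ≤ c)
    (hU : ∀ y, ∑ j, ‖(U *ᵥ y) j‖ ^ 2 = ∑ i, ‖y i‖ ^ 2) {a : ι → ℂ} (ha : ∑ i, ‖a i‖ ^ 2 = 1)
    {t : ℝ} (ht0 : 0 ≤ t) (ht1 : t < 1) :
    (1 - t) * Real.log (∑ j, (‖(U *ᵥ a) j‖ ^ 2) ^ (1 - t)⁻¹) ≤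
      2 * t * Real.log c + (1 + t) * Real.log (∑ i, (‖a i‖ ^ 2) ^ (1 + t)⁻¹) := by
  have hconv : ∀ (z : ℂ) (r : ℝ), ‖z‖ ^ (2 / r) = (‖z‖ ^ 2) ^ r⁻¹ := fun z r => by
    rw [← Real.rpow_natCast, ← Real.rpow_mul (norm_nonneg z)]
    norm_num [div_eq_mul_inv]
  have h := rpow_sum_norm_mulVec_rpow_le hc.le hUc hU a ht0 ht1
  simp only [hconv] at h
  have hSq := sum_rpow_pos (fun j => by positivity) ((hU a).trans ha) (1 - t)⁻¹
  have hSp := sum_rpow_pos (fun i => by positivity) ha (1 + t)⁻¹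
  have hlog := Real.log_le_log (by positivity) h
  rw [Real.log_rpow hSq, Real.log_mul (by positivity) (by positivity), Real.log_rpow hc,
    Real.log_rpow hSp] at hlog
  linarith

/-- **Maassen–Uffink uncertainty relation** for a unitary with entries bounded by `c`. -/
theorem Matrix.neg_two_mul_log_le_entropy_add_entropy {c : ℝ} (hc : 0 < c)
    (hUc : ∀ j i, ‖U j i‖ ≤ c) (hU : ∀ y, ∑ j, ‖(U *ᵥ y) j‖ ^ 2 = ∑ i, ‖y i‖ ^ 2) {a : ι → ℂ}
    (ha : ∑ i, ‖a i‖ ^ 2 = 1) :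
    -2 * Real.log c ≤ entropy (fun i => ‖a i‖ ^ 2) + entropy (fun j => ‖(U *ᵥ a) j‖ ^ 2) := by
  set p := fun i => ‖a i‖ ^ 2
  set q := fun j => ‖(U *ᵥ a) j‖ ^ 2
  have hp : ∀ i, 0 ≤ p i := fun i => by positivity
  have hq : ∀ j, 0 ≤ q j := fun j => by positivity
  have hq1 : ∑ j, q j = 1 := (hU a).trans ha
  set Lp := fun s : ℝ => Real.log (∑ i, p i ^ s)
  set Lq := fun s : ℝ => Real.log (∑ j, q j ^ s)
  set G := fun t : ℝ => (1 - t) * Lq (1 - t)⁻¹ - 2 * t * Real.log c - (1 + t) * Lp (1 + t)⁻¹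
  -- `G ≤ 0` on `[0, 1)` is the Riesz–Thorin bound, with equality at `t = 0`
  have hmax : IsMaxOn G (Set.Ico 0 1) 0 := fun t ht => by
    have hG0 : G 0 = 0 := by simp [G, Lp, Lq, ha, hq1]
    simp only [Set.mem_ofPred_eq, hG0, G, Lp, Lq, p, q]
    linarith [mul_log_sum_rpow_le hc hUc hU ha ht.1 ht.2]
  have hLq : HasDerivAt (fun t => Lq (1 - t)⁻¹) (-entropy q) 0 := by
    have hinv : HasDerivAt (fun t : ℝ => (1 - t)⁻¹) 1 0 := by
      simpa using ((hasDerivAt_id (0 : ℝ)).const_sub 1).fun_inv (by simp)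
    exact ((hasDerivAt_log_sum_rpow hq hq1).comp_of_eq 0 hinv (by simp)).congr_deriv (mul_one _)
  have hLp : HasDerivAt (fun t => Lp (1 + t)⁻¹) (entropy p) 0 := by
    have hinv : HasDerivAt (fun t : ℝ => (1 + t)⁻¹) (-1) 0 := by
      simpa using ((hasDerivAt_id (0 : ℝ)).const_add 1).fun_inv (by simp)
    exact ((hasDerivAt_log_sum_rpow hp ha).comp_of_eq 0 hinv (by simp)).congr_deriv (by ring)
  have hGd : HasDerivAt G (-entropy q - 2 * Real.log c - entropy p) 0 := by
    refine (((((hasDerivAt_id (0 : ℝ)).const_sub 1).fun_mul hLq).fun_sub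
      (((hasDerivAt_id (0 : ℝ)).const_mul 2).mul_const (Real.log c))).fun_sub
      (((hasDerivAt_id (0 : ℝ)).const_add 1).fun_mul hLp)).congr_deriv ?_
    simp [Lp, Lq, ha, hq1]
  linarith [hGd.nonpos_of_isMaxOn_Ico one_pos hmax]

end MaassenUffink

section Bases

variable {ι κ n : Type*} [Fintype ι] [Fintype κ] [Fintype n]

lemma IsONBasis.orthonormal [DecidableEq n] {v : ι → n → ℂ} (hv : IsONBasis v) :
    Orthonormal ℂ (fun i => WithLp.toLp 2 (v i) : ι → EuclideanSpace ℂ n) := by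
  rw [orthonormal_iff_ite]
  intro i j
  rw [EuclideanSpace.inner_toLp_toLp, dotProduct_comm, ← hv.1 i j]
  rfl

lemma IsONBasis.top_le_span [DecidableEq n] {v : ι → n → ℂ} (hv : IsONBasis v) :
    ⊤ ≤ Submodule.span ℂ (Set.range fun i => (WithLp.toLp 2 (v i) : EuclideanSpace ℂ n)) := by
  intro x _
  have hx : x = ∑ i, (star (v i) ⬝ᵥ x.ofLp) • WithLp.toLp 2 (v i) := by
    rw [← WithLp.toLp_ofLp (p := 2) x]
    conv_lhs => rw [← Matrix.one_mulVec x.ofLp, ← hv.2, Matrix.sum_mulVec]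
    simp [Matrix.vecMulVec_mulVec, WithLp.toLp_sum, WithLp.toLp_smul]
  rw [hx]
  exact Submodule.sum_mem _ fun i _ => Submodule.smul_mem _ _ (Submodule.subset_span ⟨i, rfl⟩)

noncomputable def IsONBasis.toOrthonormalBasis [DecidableEq n] {v : ι → n → ℂ}
    (hv : IsONBasis v) : OrthonormalBasis ι ℂ (EuclideanSpace ℂ n) :=
  OrthonormalBasis.mk hv.orthonormal hv.top_le_span

@[simp]
lemma IsONBasis.ofLp_toOrthonormalBasis [DecidableEq n] {v : ι → n → ℂ} (hv : IsONBasis v)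
    (i : ι) : (hv.toOrthonormalBasis i).ofLp = v i := by
  simp [IsONBasis.toOrthonormalBasis]

end Bases

section Quantum

variable {ι κ n : Type*} [Fintype ι] [Fintype κ] [Fintype n]

theorem OrthonormalBasis.neg_two_mul_log_le_entropy_add_entropy {E : Type*}
    [NormedAddCommGroup E] [InnerProductSpace ℂ E] (e : OrthonormalBasis ι ℂ E)
    (f : OrthonormalBasis κ ℂ E) {c : ℝ} (hc : 0 < c) (hef : ∀ i j, ‖inner ℂ (e i) (f j)‖ ≤ c)
    {ψ : E} (hψ : ‖ψ‖ = 1) :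
    -2 * Real.log c ≤
      entropy (fun i => ‖inner ℂ (e i) ψ‖ ^ 2) + entropy (fun j => ‖inner ℂ (f j) ψ‖ ^ 2) := by
  set U : Matrix κ ι ℂ := Matrix.of fun j i => inner ℂ (f j) (e i)
  have hUψ : ∀ φ : E, U *ᵥ (fun i => inner ℂ (e i) φ) = fun j => inner ℂ (f j) φ := fun φ => by
    ext j
    exact e.sum_inner_mul_inner (f j) φ
  have hU : ∀ y, ∑ j, ‖(U *ᵥ y) j‖ ^ 2 = ∑ i, ‖y i‖ ^ 2 := fun y => by
    obtain ⟨φ, rfl⟩ : ∃ φ : E, (fun i => inner ℂ (e i) φ) = y :=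
      ⟨e.repr.symm (WithLp.toLp 2 y), by ext i; simp [← e.repr_apply_apply]⟩
    rw [hUψ, f.sum_sq_norm_inner_right, e.sum_sq_norm_inner_right]
  have h := Matrix.neg_two_mul_log_le_entropy_add_entropy (U := U) hc
    (fun j i => (norm_inner_symm _ _).trans_le (hef i j)) hU
    (a := fun i => inner ℂ (e i) ψ) (by rw [e.sum_sq_norm_inner_right, hψ, one_pow])
  rwa [hUψ] at h

lemma Matrix.IsHermitian.re_star_dotProduct_mulVec [DecidableEq n] {A : Matrix n n ℂ}
    (hA : A.IsHermitian) (v : EuclideanSpace ℂ n) :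
    (star v.ofLp ⬝ᵥ A *ᵥ v.ofLp).re =
      ∑ k, hA.eigenvalues k * ‖inner ℂ (hA.eigenvectorBasis k) v‖ ^ 2 := by
  set u := hA.eigenvectorBasis
  have hAv : A *ᵥ v.ofLp = ∑ k, (inner ℂ (u k) v * hA.eigenvalues k) • (u k).ofLp := by
    conv_lhs => rw [← u.sum_repr' v]
    simp only [WithLp.ofLp_sum, WithLp.ofLp_smul, Matrix.mulVec_sum, Matrix.mulVec_smul, u,
      hA.mulVec_eigenvectorBasis, ← Complex.coe_smul, smul_smul]
  rw [hAv, dotProduct_sum, Complex.re_sum]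
  refine Finset.sum_congr rfl fun k _ => ?_
  rw [dotProduct_smul, smul_eq_mul, dotProduct_comm, ← EuclideanSpace.inner_eq_star_dotProduct,
    ← inner_conj_symm v (u k), mul_right_comm, Complex.mul_conj, Complex.normSq_eq_norm_sq]
  norm_cast
  ring

theorem IsDensityMatrix.neg_two_mul_log_le_entropy_add_entropy [DecidableEq n]
    {σ : Matrix n n ℂ} (hσ : IsDensityMatrix σ) (e : OrthonormalBasis ι ℂ (EuclideanSpace ℂ n))
    (f : OrthonormalBasis κ ℂ (EuclideanSpace ℂ n)) {c : ℝ} (hc : 0 < c)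
    (hef : ∀ i j, ‖inner ℂ (e i) (f j)‖ ≤ c) :
    -2 * Real.log c ≤ entropy (fun i => (star (e i).ofLp ⬝ᵥ σ *ᵥ (e i).ofLp).re) +
      entropy (fun j => (star (f j).ofLp ⬝ᵥ σ *ᵥ (f j).ofLp).re) := by
  obtain ⟨hpos, htr⟩ := hσ
  have hlam1 : ∑ k, hpos.1.eigenvalues k = 1 := by
    have h := congrArg Complex.re hpos.1.trace_eq_sum_eigenvalues
    rw [htr] at h
    simp only [Complex.re_sum, Complex.one_re] at h
    exact h.symm
  simp only [hpos.1.re_star_dotProduct_mulVec, norm_inner_symm (hpos.1.eigenvectorBasis _)]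
  set lam := hpos.1.eigenvalues
  set u := hpos.1.eigenvectorBasis
  have hlam : ∀ k, 0 ≤ lam k := hpos.eigenvalues_nonneg
  calc -2 * Real.log c
      = ∑ k, lam k * (-2 * Real.log c) := by rw [← Finset.sum_mul, hlam1, one_mul]
    _ ≤ ∑ k, lam k * (entropy (fun i => ‖inner ℂ (e i) (u k)‖ ^ 2) +
          entropy (fun j => ‖inner ℂ (f j) (u k)‖ ^ 2)) :=
        Finset.sum_le_sum fun k _ => mul_le_mul_of_nonneg_left
          (e.neg_two_mul_log_le_entropy_add_entropy f hc hef (u.orthonormal.1 k)) (hlam k)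
    _ ≤ _ := by
        simp only [mul_add, Finset.sum_add_distrib]
        exact add_le_add (sum_mul_entropy_le_entropy_sum hlam hlam1 fun _ _ => by positivity)
          (sum_mul_entropy_le_entropy_sum hlam hlam1 fun _ _ => by positivity)


lemma Matrix.PosSemidef.isDensityMatrix_inv_trace_smul {τ : Matrix n n ℂ} (hτ : τ.PosSemidef)
    (h : τ.trace.re ≠ 0) : IsDensityMatrix (τ.trace.re⁻¹ • τ) := by
  obtain ⟨hre, him⟩ := Complex.nonneg_iff.mp hτ.trace_nonneg
  refine ⟨hτ.smul (inv_nonneg.mpr hre), ?_⟩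
  rw [Matrix.trace_smul, Complex.real_smul, ← Complex.re_add_im τ.trace, ← him]
  simp [h]

theorem IsDensityMatrix.log_le_entropy_add_entropy [DecidableEq n] {σ : Matrix n n ℂ}
    (hσ : IsDensityMatrix σ) {B₁ : ι → n → ℂ} {B₂ : κ → n → ℂ} (hB₁ : IsONBasis B₁)
    (hB₂ : IsONBasis B₂) {d : ℝ} (hd : 0 < d)
    (hMUB : ∀ i j, ‖∑ x, star (B₁ i x) * B₂ j x‖ ^ 2 = 1 / d) :
    Real.log d ≤ entropy (fun i => (star (B₁ i) ⬝ᵥ σ *ᵥ B₁ i).re) +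
      entropy (fun j => (star (B₂ j) ⬝ᵥ σ *ᵥ B₂ j).re) := by
  have hc : ∀ i j, ‖inner ℂ (hB₁.toOrthonormalBasis i) (hB₂.toOrthonormalBasis j)‖ ≤ √(1 / d) :=
    fun i j => by
      rw [← hMUB i j, Real.sqrt_sq (norm_nonneg _), EuclideanSpace.inner_eq_star_dotProduct,
        dotProduct_comm]
      simp [dotProduct]
  have h := hσ.neg_two_mul_log_le_entropy_add_entropy _ _ (by positivity) hc
  simp only [IsONBasis.ofLp_toOrthonormalBasis, one_div, Real.log_sqrt (inv_nonneg.mpr hd.le),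
    Real.log_inv] at h
  linarith

theorem Matrix.PosSemidef.log_le_entropy_add_entropy_div_trace [DecidableEq n]
    {τ : Matrix n n ℂ} (hτ : τ.PosSemidef) (htr : τ.trace.re ≠ 0) {B₁ : ι → n → ℂ}
    {B₂ : κ → n → ℂ} (hB₁ : IsONBasis B₁) (hB₂ : IsONBasis B₂) {d : ℝ} (hd : 0 < d)
    (hMUB : ∀ i j, ‖∑ x, star (B₁ i x) * B₂ j x‖ ^ 2 = 1 / d) :
    Real.log d ≤ entropy (fun i => (star (B₁ i) ⬝ᵥ τ *ᵥ B₁ i).re / τ.trace.re) +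
      entropy (fun j => (star (B₂ j) ⬝ᵥ τ *ᵥ B₂ j).re / τ.trace.re) := by
  simpa only [Matrix.smul_mulVec, dotProduct_smul, Complex.smul_re, smul_eq_mul,
    div_eq_inv_mul] using
    (hτ.isDensityMatrix_inv_trace_smul htr).log_le_entropy_add_entropy hB₁ hB₂ hd hMUB

end Quantum

section Bipartite

variable {a b ι κ : Type*} [Fintype a] [Fintype b] [Fintype ι] [Fintype κ]

lemma trace_ptraceR (X : Matrix (a × b) (a × b) ℂ) : (ptraceR X).trace = X.trace := by
  simp [ptraceR, Matrix.trace, Fintype.sum_prod_type]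

lemma ptraceR_eq_sum_submatrix (X : Matrix (a × b) (a × b) ℂ) :
    ptraceR X = ∑ k, X.submatrix (fun i => (i, k)) (fun i => (i, k)) := by
  ext i j
  simp [ptraceR, Matrix.sum_apply]

lemma Matrix.PosSemidef.ptraceR {X : Matrix (a × b) (a × b) ℂ} (hX : X.PosSemidef) :
    (ptraceR X).PosSemidef := by
  rw [ptraceR_eq_sum_submatrix]
  exact Matrix.posSemidef_sum _ fun k _ => hX.submatrix _

lemma trace_kronecker_one_mul [DecidableEq b] (M : Matrix a a ℂ) (X : Matrix (a × b) (a × b) ℂ) :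
    ((M ⊗ₖ (1 : Matrix b b ℂ)) * X).trace = (M * ptraceR X).trace := by
  simp only [trace, diag_apply, Matrix.mul_apply, kroneckerMap_apply, Matrix.one_apply, mul_ite,
    mul_one, mul_zero, ite_mul, zero_mul, Fintype.sum_prod_type, Finset.sum_ite_eq,
    Finset.mem_univ, ↓reduceIte, ptraceR, Finset.mul_sum]
  exact Finset.sum_congr rfl fun _ _ => Finset.sum_comm

variable [DecidableEq a]

lemma ptraceR_one_kronecker_mul_comm (A : Matrix b b ℂ) (X : Matrix (a × b) (a × b) ℂ) :
    ptraceR ((1 ⊗ₖ A) * X) = ptraceR (X * (1 ⊗ₖ A)) := by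
  ext i j
  simp only [ptraceR, Matrix.mul_apply, kroneckerMap_apply, Matrix.one_apply, ite_mul, one_mul,
    zero_mul, Fintype.sum_prod_type, Finset.sum_ite_irrel, Finset.sum_const_zero,
    Finset.sum_ite_eq, Finset.mem_univ, ↓reduceIte, mul_ite, mul_zero, Finset.sum_ite_eq']
  rw [Finset.sum_comm]
  exact Finset.sum_congr rfl fun _ _ => Finset.sum_congr rfl fun _ _ => mul_comm _ _

variable [DecidableEq b]

lemma posSemidef_ptraceR_one_kronecker_mul {ρ : Matrix (a × b) (a × b) ℂ} (hρ : ρ.PosSemidef)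
    {N : Matrix b b ℂ} (hN : N.PosSemidef) : (ptraceR ((1 ⊗ₖ N) * ρ)).PosSemidef := by
  obtain ⟨D, rfl⟩ : ∃ D : Matrix b b ℂ, N = Dᴴ * D := by
    open scoped MatrixOrder Matrix.Norms.L2Operator in
    exact CStarAlgebra.nonneg_iff_eq_star_mul_self.mp hN.nonneg
  have hfac : (1 : Matrix a a ℂ) ⊗ₖ (Dᴴ * D) = (1 ⊗ₖ Dᴴ) * (1 ⊗ₖ D) := by
    rw [← Matrix.mul_kronecker_mul, Matrix.one_mul]
  have hstar : (1 : Matrix a a ℂ) ⊗ₖ Dᴴ = (1 ⊗ₖ D)ᴴ := by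
    rw [Matrix.conjTranspose_kronecker, Matrix.conjTranspose_one]
  rw [hfac, Matrix.mul_assoc, ptraceR_one_kronecker_mul_comm, hstar]
  exact (hρ.mul_mul_conjTranspose_same _).ptraceR

lemma measProb_eq_trace_mul_ptraceR (ρ : Matrix (a × b) (a × b) ℂ) (M : ι → Matrix a a ℂ)
    (N : κ → Matrix b b ℂ) (i : ι) (s : κ) :
    measProb ρ M N i s = (M i * ptraceR ((1 ⊗ₖ N s) * ρ)).trace.re := by
  rw [measProb, ← trace_kronecker_one_mul, ← Matrix.mul_assoc, ← Matrix.mul_kronecker_mul,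
    Matrix.mul_one, Matrix.one_mul]

lemma measProb_vecMulVec (ρ : Matrix (a × b) (a × b) ℂ) (v : ι → a → ℂ) (N : κ → Matrix b b ℂ)
    (i : ι) (s : κ) :
    measProb ρ (fun i => Matrix.vecMulVec (v i) (star (v i))) N i s =
      (star (v i) ⬝ᵥ ptraceR ((1 ⊗ₖ N s) * ρ) *ᵥ v i).re := by
  rw [measProb_eq_trace_mul_ptraceR, Matrix.vecMulVec_mul, Matrix.trace_vecMulVec,
    dotProduct_comm, Matrix.dotProduct_mulVec]

lemma sum_measProb {M : ι → Matrix a a ℂ} (hM : ∑ i, M i = 1) (ρ : Matrix (a × b) (a × b) ℂ)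
    (N : κ → Matrix b b ℂ) (s : κ) :
    ∑ i, measProb ρ M N i s = (ptraceR ((1 ⊗ₖ N s) * ρ)).trace.re := by
  simp only [measProb_eq_trace_mul_ptraceR, ← Complex.re_sum, ← Matrix.trace_sum,
    ← Finset.sum_mul, hM, Matrix.one_mul]

lemma sum_sum_measProb {M : ι → Matrix a a ℂ} (hM : ∑ i, M i = 1) {N : κ → Matrix b b ℂ}
    (hN : ∑ s, N s = 1) (ρ : Matrix (a × b) (a × b) ℂ) :
    ∑ s, ∑ i, measProb ρ M N i s = ρ.trace.re := by
  have hsum : ∑ s, (1 : Matrix a a ℂ) ⊗ₖ N s = 1 := by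
    rw [← Matrix.one_kronecker_one, ← hN]
    ext
    simp [Matrix.sum_apply, Finset.mul_sum]
  simp only [sum_measProb hM, trace_ptraceR, ← Complex.re_sum, ← Matrix.trace_sum,
    ← Finset.sum_mul, hsum, Matrix.one_mul]

end Bipartite

/-- if Alice measures projectively in one of two mutually
unbiased bases of her d_A-dimensional system while Bob performs an arbitrary
POVM, the two resulting classical mutual informations with Bob's outcome
satisfy I₁ + I₂ ≤ log₂ d_A. -/
theorem stmt16 (dA : ℕ) (hdA : 2 ≤ dA) {b κ : Type*} [Fintype b] [Fintype κ]
    [DecidableEq b]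
    (ρ : Matrix (Fin dA × b) (Fin dA × b) ℂ) (hρ : IsDensityMatrix ρ)
    (B₁ B₂ : Fin dA → Fin dA → ℂ) (hB₁ : IsONBasis B₁) (hB₂ : IsONBasis B₂)
    (hMUB : ∀ i j, ‖∑ x, star (B₁ i x) * B₂ j x‖ ^ 2 = 1 / dA)
    (N : κ → Matrix b b ℂ) (hN : IsPOVM N) :
    cMutualInfo (measProb ρ (fun i => Matrix.vecMulVec (B₁ i) (star (B₁ i))) N) +
    cMutualInfo (measProb ρ (fun i => Matrix.vecMulVec (B₂ i) (star (B₂ i))) N) ≤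
    Real.logb 2 dA := by
  obtain ⟨hρ, hρ1⟩ := hρ
  have hτ : ∀ s, (ptraceR ((1 ⊗ₖ N s) * ρ)).PosSemidef := fun s =>
    posSemidef_ptraceR_one_kronecker_mul hρ (hN.1 s)
  have hP : ∀ (B : Fin dA → Fin dA → ℂ) i s,
      0 ≤ measProb ρ (fun i => Matrix.vecMulVec (B i) (star (B i))) N i s := fun B i s => by
    rw [measProb_vecMulVec]
    exact (hτ s).re_dotProduct_nonneg _
  have htot : ∑ s, (ptraceR ((1 ⊗ₖ N s) * ρ)).trace.re = 1 := by
    simpa only [sum_measProb hB₁.2, hρ1, Complex.one_re] using sum_sum_measProb hB₁.2 hN.2 ρ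
  have h := cMutualInfo_add_cMutualInfo_le (hP B₁) (hP B₂) (sum_measProb hB₁.2 ρ N)
    (sum_measProb hB₂.2 ρ N) htot (L := Real.log dA) fun s hs => by
      simpa only [measProb_vecMulVec] using
        (hτ s).log_le_entropy_add_entropy_div_trace hs hB₁ hB₂ (by positivity) hMUB
  simpa [Real.logb] using h
end
end

section
/- The DQC1 state ρ_{n+1}(α) = 2^{−(n+1)} Σ_i (|0⟩⟨0| + |1⟩⟨1| + α e^{−iθ_i}|0⟩⟨1| + α e^{iθ_i}|1⟩⟨0|) ⊗ |e_i⟩⟨e_i| (control qubit A, n-qubit register B, where U_n|e_i⟩ = e^{iθ_i}|e_i⟩) is separable across the A:B cut, and its quantum mutual information equals S(A:B) = H{(1+|β|)/2, (1−|β|)/2} − H{(1+α)/2, (1−α)/2} with β = 2^{−n} α Tr(U_n). -/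
open Matrix BigOperators
open scoped Kronecker Classical ComplexOrder

noncomputable section

/-- Separability of a bipartite state: it is a convex combination of product
states. -/
def IsSeparableState {a b : Type*} [Fintype a] [Fintype b]
    (ρ : Matrix (a × b) (a × b) ℂ) : Prop :=
  ∃ (k : ℕ) (w : Fin k → ℝ) (σA : Fin k → Matrix a a ℂ) (σB : Fin k → Matrix b b ℂ),
    (∀ j, 0 ≤ w j) ∧ (∑ j, w j = 1) ∧
    (∀ j, IsDensityMatrix (σA j)) ∧ (∀ j, IsDensityMatrix (σB j)) ∧
    ρ = ∑ j, w j • (σA j ⊗ₖ σB j)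

/-!
In the eigenbasis `e` of `U` the state is the uniform mixture over `i` of the product states
`qubitState (α e^{iθ_i}) ⊗ |e_i⟩⟨e_i|`, hence separable, and its marginals are
`qubitState β` and `I / 2ⁿ`. All entropies are read off characteristic polynomials: a qubit
state `qubitState z` has eigenvalues `(1 ± ‖z‖) / 2`, and conjugating by `1 ⊗ [e]` makes the
joint state block diagonal with blocks `2⁻ⁿ qubitState (α e^{iθ_i})`, so its spectrum is
`2⁻ⁿ (1 ± α) / 2`, each with multiplicity `2ⁿ`. The `n` bits of register entropy cancel in
`S(A:B)`.
-/

open Polynomial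

section Spectrum

variable {m : Type*} [Fintype m] [DecidableEq m] {A : Matrix m m ℂ} {μ : m → ℝ}

theorem Matrix.IsHermitian.map_eigenvalues_eq_of_charpoly (hA : A.IsHermitian)
    (h : A.charpoly = ∏ i, (X - C (μ i : ℂ))) :
    Finset.univ.val.map hA.eigenvalues = Finset.univ.val.map μ := by
  have hprod : ∏ i, (X - C (μ i : ℂ))
      = (((Finset.univ.val.map μ).map Complex.ofReal).map fun a => X - C a).prod := by
    rw [Multiset.map_map, Multiset.map_map]; rfl
  have hroots := hA.roots_charpoly_eq_eigenvalues
  rw [h, hprod, roots_multiset_prod_X_sub_C, ← Multiset.map_map] at hroots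
  exact Multiset.map_injective Complex.ofReal_injective hroots.symm

theorem vnEntropy_eq_shannon_of_charpoly (hA : A.IsHermitian)
    (h : A.charpoly = ∏ i, (X - C (μ i : ℂ))) : vnEntropy A = shannon μ := by
  have hmap := congrArg (Multiset.map fun x => x * Real.logb 2 x)
    (hA.map_eigenvalues_eq_of_charpoly h)
  simp only [Multiset.map_map] at hmap
  rw [vnEntropy, dif_pos hA, shannon, shannon, Finset.sum_eq_multiset_sum,
    Finset.sum_eq_multiset_sum]
  exact congrArg _ (congrArg Multiset.sum hmap)

theorem Matrix.IsHermitian.posSemidef_of_charpoly (hA : A.IsHermitian)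
    (h : A.charpoly = ∏ i, (X - C (μ i : ℂ))) (hμ : 0 ≤ μ) : A.PosSemidef := by
  refine hA.posSemidef_iff_eigenvalues_nonneg.mpr fun j => ?_
  have hj : hA.eigenvalues j ∈ Finset.univ.val.map μ := by
    rw [← hA.map_eigenvalues_eq_of_charpoly h]
    exact Multiset.mem_map_of_mem _ (Finset.mem_univ_val j)
  obtain ⟨i, -, hi⟩ := Multiset.mem_map.mp hj
  exact hi ▸ hμ i

end Spectrum

theorem Matrix.charpoly_blockDiagonal {m ι R : Type*} [Fintype m] [DecidableEq m] [Fintype ι]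
    [DecidableEq ι] [CommRing R] (A : ι → Matrix m m R) :
    (blockDiagonal A).charpoly = ∏ i, (A i).charpoly := by
  have : charmatrix (blockDiagonal A) = blockDiagonal fun i => charmatrix (A i) := by
    ext ⟨a, i⟩ ⟨b, j⟩
    obtain rfl | hij := eq_or_ne i j
    · simp [charmatrix_apply, diagonal_apply]
    · simp [blockDiagonal_apply_ne _ _ _ hij, hij]
  rw [charpoly, this, det_blockDiagonal]
  rfl

theorem IsONBasis.charpoly_sum_kronecker {m ι : Type*} [Fintype m] [DecidableEq m] [Fintype ι]
    [DecidableEq ι] {v : ι → ι → ℂ} (hv : IsONBasis v) (A : ι → Matrix m m ℂ) :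
    (∑ i, A i ⊗ₖ vecMulVec (v i) (star (v i))).charpoly = ∏ i, (A i).charpoly := by
  set W : Matrix (m × ι) (m × ι) ℂ := 1 ⊗ₖ (of v)ᵀ
  have hWW : Wᴴ * W = 1 := by
    have hV : ((of v)ᵀ)ᴴ * (of v)ᵀ = 1 := by
      ext i j
      rw [one_apply]
      convert hv.1 i j
      simp [mul_apply]
    rw [conjTranspose_kronecker, ← mul_kronecker_mul, hV, conjTranspose_one, mul_one,
      one_kronecker_one]
  have hconj : ∑ i, A i ⊗ₖ vecMulVec (v i) (star (v i)) = W * blockDiagonal A * Wᴴ := by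
    ext ⟨a, x⟩ ⟨b, y⟩
    simp only [W, Matrix.sum_apply, kroneckerMap_apply, vecMulVec_apply, mul_apply,
      conjTranspose_apply, Fintype.sum_prod_type, one_apply, blockDiagonal_apply,
      transpose_apply, of_apply]
    simp [apply_ite (starRingEnd ℂ), mul_assoc, mul_left_comm]
  rw [hconj, charpoly_mul_comm, ← mul_assoc, hWW, one_mul, charpoly_blockDiagonal]

/-- The qubit state `(I + Re z σ₁ + Im z σ₂) / 2`. -/
def qubitState (z : ℂ) : Matrix (Fin 2) (Fin 2) ℂ := !![1 / 2, star z / 2; z / 2, 1 / 2]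

def qubitSpectrum (r : ℝ) : Fin 2 → ℝ := ![(1 + r) / 2, 1 - (1 + r) / 2]

theorem isHermitian_qubitState (z : ℂ) : (qubitState z).IsHermitian := by
  ext i j
  fin_cases i <;> fin_cases j <;> simp [qubitState]

theorem trace_qubitState (z : ℂ) : (qubitState z).trace = 1 := by
  norm_num [qubitState, trace_fin_two]

theorem charpoly_smul_qubitState (t : ℝ) (z : ℂ) :
    (t • qubitState z).charpoly = ∏ s, (X - C ((t * qubitSpectrum ‖z‖ s : ℝ) : ℂ)) := by
  have htr : (t • qubitState z).trace
      = ((t * qubitSpectrum ‖z‖ 0 + t * qubitSpectrum ‖z‖ 1 : ℝ) : ℂ) := by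
    simp [qubitState, qubitSpectrum, trace_fin_two]
    ring
  have hdet : (t • qubitState z).det
      = ((t * qubitSpectrum ‖z‖ 0) * (t * qubitSpectrum ‖z‖ 1) : ℝ) := by
    have hnorm : (starRingEnd ℂ) z * z = (‖z‖ : ℂ) ^ 2 := Complex.conj_mul' z
    simp [qubitState, qubitSpectrum, det_fin_two]
    linear_combination (-(t : ℂ) ^ 2 / 4) * hnorm
  rw [charpoly_fin_two, htr, hdet, Fin.prod_univ_two]
  simp only [Complex.ofReal_add, Complex.ofReal_mul, C_add, C_mul]
  ring

theorem charpoly_qubitState (z : ℂ) :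
    (qubitState z).charpoly = ∏ s, (X - C (qubitSpectrum ‖z‖ s : ℂ)) := by
  simpa using charpoly_smul_qubitState 1 z

theorem vnEntropy_qubitState (z : ℂ) : vnEntropy (qubitState z) = H2 ((1 + ‖z‖) / 2) :=
  vnEntropy_eq_shannon_of_charpoly (isHermitian_qubitState z) (charpoly_qubitState z)

theorem posSemidef_qubitState {z : ℂ} (hz : ‖z‖ ≤ 1) : (qubitState z).PosSemidef := by
  refine (isHermitian_qubitState z).posSemidef_of_charpoly (charpoly_qubitState z) fun s => ?_
  fin_cases s <;> simp [qubitSpectrum] <;> linarith [norm_nonneg z]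

theorem isDensityMatrix_qubitState {z : ℂ} (hz : ‖z‖ ≤ 1) : IsDensityMatrix (qubitState z) :=
  ⟨posSemidef_qubitState hz, trace_qubitState z⟩

theorem sum_smul_qubitState {ι : Type*} [Fintype ι] {w : ι → ℝ} (hw : ∑ i, w i = 1)
    (z : ι → ℂ) : ∑ i, w i • qubitState (z i) = qubitState (∑ i, w i * z i) := by
  have hw' : ∑ i, (w i : ℂ) = 1 := by exact_mod_cast hw
  ext a b
  fin_cases a <;> fin_cases b <;>
    simp [qubitState, Matrix.sum_apply, ← Finset.sum_mul, Finset.sum_div, mul_div_assoc, hw',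
      star_sum]

section PartialTrace

variable {a b : Type*} [Fintype a] [Fintype b]

theorem ptraceR_sum {ι : Type*} (s : Finset ι) (ρ : ι → Matrix (a × b) (a × b) ℂ) :
    ptraceR (∑ i ∈ s, ρ i) = ∑ i ∈ s, ptraceR (ρ i) := by
  ext i j
  simp only [ptraceR, Matrix.sum_apply]
  exact Finset.sum_comm

theorem ptraceL_sum {ι : Type*} (s : Finset ι) (ρ : ι → Matrix (a × b) (a × b) ℂ) :
    ptraceL (∑ i ∈ s, ρ i) = ∑ i ∈ s, ptraceL (ρ i) := by
  ext i j
  simp only [ptraceL, Matrix.sum_apply]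
  exact Finset.sum_comm

theorem ptraceR_smul (c : ℝ) (ρ : Matrix (a × b) (a × b) ℂ) :
    ptraceR (c • ρ) = c • ptraceR ρ := by
  ext i j
  simp [ptraceR, Finset.smul_sum]

theorem ptraceL_smul (c : ℝ) (ρ : Matrix (a × b) (a × b) ℂ) :
    ptraceL (c • ρ) = c • ptraceL ρ := by
  ext i j
  simp [ptraceL, Finset.smul_sum]

theorem ptraceR_kronecker (A : Matrix a a ℂ) (B : Matrix b b ℂ) :
    ptraceR (A ⊗ₖ B) = B.trace • A := by
  ext i j
  simp [ptraceR, trace, Finset.mul_sum, mul_comm]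

theorem ptraceL_kronecker (A : Matrix a a ℂ) (B : Matrix b b ℂ) :
    ptraceL (A ⊗ₖ B) = A.trace • B := by
  ext i j
  simp [ptraceL, trace, Finset.sum_mul]

end PartialTrace

section ONBasis

variable {ι : Type*} [Fintype ι] [DecidableEq ι] {v : ι → ι → ℂ}

theorem IsONBasis.trace_vecMulVec (hv : IsONBasis v) (i : ι) :
    (vecMulVec (v i) (star (v i))).trace = 1 := by
  simpa [dotProduct, mul_comm] using hv.1 i i

theorem IsONBasis.isDensityMatrix_vecMulVec (hv : IsONBasis v) (i : ι) :
    IsDensityMatrix (vecMulVec (v i) (star (v i))) :=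
  ⟨posSemidef_vecMulVec_self_star _, hv.trace_vecMulVec i⟩

theorem IsONBasis.trace_eq_sum {A : Matrix ι ι ℂ} {c : ι → ℂ} (hv : IsONBasis v)
    (h : ∀ i, A *ᵥ v i = c i • v i) : A.trace = ∑ i, c i := by
  have hA : A = ∑ i, c i • vecMulVec (v i) (star (v i)) := by
    conv_lhs => rw [← mul_one A, ← hv.2, Finset.mul_sum]
    simp_rw [mul_vecMulVec, h, smul_vecMulVec]
  simp [hA, trace_sum, hv.trace_vecMulVec]

end ONBasis

section Shannon

variable {ι : Type*} [Fintype ι]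

theorem shannon_uniform :
    shannon (fun _ : ι => (Fintype.card ι : ℝ)⁻¹) = Real.logb 2 (Fintype.card ι) := by
  rcases isEmpty_or_nonempty ι with hι | hι
  · simp [shannon]
  · have hN : (Fintype.card ι : ℝ) ≠ 0 := by positivity
    simp [shannon, Real.logb_inv, hN]

theorem shannon_inv_card_mul_fst [Nonempty ι] {κ : Type*} [Fintype κ] {p : κ → ℝ}
    (hp : ∑ k, p k = 1) :
    shannon (fun x : κ × ι => (Fintype.card ι : ℝ)⁻¹ * p x.1)
      = shannon p + Real.logb 2 (Fintype.card ι) := by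
  set N := Fintype.card ι
  have hN : (N : ℝ) ≠ 0 := Nat.cast_ne_zero.mpr Fintype.card_ne_zero
  have hterm : ∀ k, ∑ _i : ι, (N : ℝ)⁻¹ * p k * Real.logb 2 ((N : ℝ)⁻¹ * p k)
      = p k * Real.logb 2 (p k) - p k * Real.logb 2 N := by
    intro k
    rcases eq_or_ne (p k) 0 with h0 | h0
    · simp [h0]
    · rw [Finset.sum_const, Finset.card_univ, nsmul_eq_mul, Real.logb_mul (inv_ne_zero hN) h0,
        Real.logb_inv]
      field_simp
      ring
  simp only [shannon, Fintype.sum_prod_type, hterm, Finset.sum_sub_distrib, ← Finset.sum_mul, hp]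
  ring

end Shannon

theorem vnEntropy_inv_card_smul_one {ι : Type*} [Fintype ι] [DecidableEq ι] :
    vnEntropy ((Fintype.card ι : ℝ)⁻¹ • (1 : Matrix ι ι ℂ)) = Real.logb 2 (Fintype.card ι) := by
  have hdiag : (Fintype.card ι : ℝ)⁻¹ • (1 : Matrix ι ι ℂ)
      = diagonal fun _ => (((Fintype.card ι : ℝ)⁻¹ : ℝ) : ℂ) := by
    ext i j
    by_cases h : i = j <;> simp [one_apply, h]
  rw [← shannon_uniform]
  refine vnEntropy_eq_shannon_of_charpoly ?_ (by rw [hdiag, charpoly_diagonal])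
  rw [hdiag]
  exact isHermitian_diagonal_of_self_adjoint _ (by ext; simp)

section DQC1

variable {ι : Type*} [Fintype ι] [DecidableEq ι] {v : ι → ι → ℂ}

/-- The paper's `ρ_{n+1}(α)` is `dqc1State e (fun i => α e^{iθ_i})`. -/
def dqc1State (v : ι → ι → ℂ) (z : ι → ℂ) : Matrix (Fin 2 × ι) (Fin 2 × ι) ℂ :=
  ∑ i, (Fintype.card ι : ℝ)⁻¹ • (qubitState (z i) ⊗ₖ vecMulVec (v i) (star (v i)))

theorem isSeparableState_dqc1State [Nonempty ι] (hv : IsONBasis v) {z : ι → ℂ}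
    (hz : ∀ i, ‖z i‖ ≤ 1) : IsSeparableState (dqc1State v z) := by
  set e := Fintype.equivFin ι
  refine ⟨Fintype.card ι, fun _ => (Fintype.card ι : ℝ)⁻¹, fun j => qubitState (z (e.symm j)),
    fun j => vecMulVec (v (e.symm j)) (star (v (e.symm j))), fun _ => by positivity, ?_,
    fun j => isDensityMatrix_qubitState (hz _), fun j => hv.isDensityMatrix_vecMulVec _, ?_⟩
  · simp
  · exact (e.symm.sum_comp _).symm

theorem ptraceR_dqc1State [Nonempty ι] (hv : IsONBasis v) (z : ι → ℂ) :
    ptraceR (dqc1State v z) = qubitState (∑ i, (Fintype.card ι : ℝ)⁻¹ * z i) := by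
  rw [← sum_smul_qubitState (by simp), dqc1State, ptraceR_sum]
  simp [ptraceR_smul, ptraceR_kronecker, hv.trace_vecMulVec]

theorem ptraceL_dqc1State (hv : IsONBasis v) (z : ι → ℂ) :
    ptraceL (dqc1State v z) = (Fintype.card ι : ℝ)⁻¹ • (1 : Matrix ι ι ℂ) := by
  simp [dqc1State, ptraceL_sum, ptraceL_smul, ptraceL_kronecker, trace_qubitState,
    ← Finset.smul_sum, hv.2]

theorem vnEntropy_dqc1State [Nonempty ι] (hv : IsONBasis v) {z : ι → ℂ} {r : ℝ}
    (hz : ∀ i, ‖z i‖ = r) :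
    vnEntropy (dqc1State v z) = H2 ((1 + r) / 2) + Real.logb 2 (Fintype.card ι) := by
  have hherm : (dqc1State v z).IsHermitian := by
    refine isSelfAdjoint_sum _ fun i _ => IsSelfAdjoint.smul (.all _) ?_
    change (_ ⊗ₖ _)ᴴ = _
    rw [conjTranspose_kronecker, (isHermitian_qubitState _).eq,
      (posSemidef_vecMulVec_self_star _).isHermitian.eq]
  have hcharpoly : (dqc1State v z).charpoly
      = ∏ x : Fin 2 × ι, (X - C (((Fintype.card ι : ℝ)⁻¹ * qubitSpectrum r x.1 : ℝ) : ℂ)) := by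
    simp only [dqc1State, ← smul_kronecker, hv.charpoly_sum_kronecker, charpoly_smul_qubitState,
      hz, Fintype.prod_prod_type]
    exact Finset.prod_comm
  rw [vnEntropy_eq_shannon_of_charpoly hherm hcharpoly,
    shannon_inv_card_mul_fst (by simp [qubitSpectrum])]
  rfl

theorem qMutualInfo_dqc1State [Nonempty ι] (hv : IsONBasis v) {z : ι → ℂ} {r : ℝ}
    (hz : ∀ i, ‖z i‖ = r) :
    qMutualInfo (dqc1State v z)
      = H2 ((1 + ‖∑ i, (Fintype.card ι : ℝ)⁻¹ * z i‖) / 2) - H2 ((1 + r) / 2) := by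
  rw [qMutualInfo, ptraceR_dqc1State hv, ptraceL_dqc1State hv, vnEntropy_qubitState,
    vnEntropy_inv_card_smul_one, vnEntropy_dqc1State hv hz]
  ring

end DQC1

theorem stmt19_general (n : ℕ) (α : ℝ) (hα₀ : 0 ≤ α) (hα₁ : α ≤ 1)
    (U : Matrix (Fin (2 ^ n)) (Fin (2 ^ n)) ℂ)
    (e : Fin (2 ^ n) → Fin (2 ^ n) → ℂ) (he : IsONBasis e)
    (θ : Fin (2 ^ n) → ℝ)
    (heig : ∀ i, U.mulVec (e i) = Complex.exp (θ i * Complex.I) • e i)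
    (ρ : Matrix (Fin 2 × Fin (2 ^ n)) (Fin 2 × Fin (2 ^ n)) ℂ)
    (hρ : ρ = (1 / 2 ^ (n + 1) : ℝ) • ∑ i,
        (!![1, (α : ℂ) * Complex.exp (-(θ i) * Complex.I);
            (α : ℂ) * Complex.exp ((θ i) * Complex.I), 1] ⊗ₖ
          Matrix.vecMulVec (e i) (star (e i))))
    (β : ℂ) (hβ : β = (2 ^ n : ℂ)⁻¹ * (α : ℂ) * U.trace) :
    IsSeparableState ρ ∧
    qMutualInfo ρ = H2 ((1 + ‖β‖) / 2) - H2 ((1 + α) / 2) := by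
  set z : Fin (2 ^ n) → ℂ := fun i => α * Complex.exp (θ i * Complex.I)
  have hz : ∀ i, ‖z i‖ = α := fun i => by
    simp [z, Complex.norm_exp_ofReal_mul_I, abs_of_nonneg hα₀]
  have hρz : ρ = dqc1State e z := by
    rw [hρ, dqc1State, Finset.smul_sum]
    refine Finset.sum_congr rfl fun i _ => ?_
    have hblock : !![1, (α : ℂ) * Complex.exp (-(θ i) * Complex.I);
        (α : ℂ) * Complex.exp ((θ i) * Complex.I), 1] = (2 : ℝ) • qubitState (z i) := by
      ext a b
      fin_cases a <;> fin_cases b <;> simp [qubitState, z, ← Complex.exp_conj] <;> ring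
    rw [hblock, smul_kronecker, smul_smul]
    congr 1
    simp [pow_succ]
    ring
  have hβz : β = ∑ i, (Fintype.card (Fin (2 ^ n)) : ℝ)⁻¹ * z i := by
    rw [hβ, he.trace_eq_sum heig, Finset.mul_sum]
    simp [z, mul_assoc]
  rw [hρz, hβz]
  exact ⟨isSeparableState_dqc1State he fun i => (hz i).trans_le hα₁,
    qMutualInfo_dqc1State he hz⟩

/-- the DQC1 state
ρ_{n+1}(α) = 2^{−(n+1)} Σ_i (|0⟩⟨0|+|1⟩⟨1|+αe^{−iθ_i}|0⟩⟨1|+αe^{iθ_i}|1⟩⟨0|)⊗|e_i⟩⟨e_i|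
is separable across the control/register cut, and its quantum mutual
information equals H{(1+|β|)/2,(1−|β|)/2} − H{(1+α)/2,(1−α)/2} with
β = 2^{−n} α Tr(U_n). -/
theorem stmt19 (n : ℕ) (α : ℝ) (hα₀ : 0 ≤ α) (hα₁ : α ≤ 1)
    (U : Matrix (Fin (2 ^ n)) (Fin (2 ^ n)) ℂ)
    (hU : U ∈ Matrix.unitaryGroup (Fin (2 ^ n)) ℂ)
    (e : Fin (2 ^ n) → Fin (2 ^ n) → ℂ) (he : IsONBasis e)
    (θ : Fin (2 ^ n) → ℝ)
    (heig : ∀ i, U.mulVec (e i) = Complex.exp (θ i * Complex.I) • e i)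
    (ρ : Matrix (Fin 2 × Fin (2 ^ n)) (Fin 2 × Fin (2 ^ n)) ℂ)
    (hρ : ρ = (1 / 2 ^ (n + 1) : ℝ) • ∑ i,
        (!![1, (α : ℂ) * Complex.exp (-(θ i) * Complex.I);
            (α : ℂ) * Complex.exp ((θ i) * Complex.I), 1] ⊗ₖ
          Matrix.vecMulVec (e i) (star (e i))))
    (β : ℂ) (hβ : β = (2 ^ n : ℂ)⁻¹ * (α : ℂ) * U.trace) :
    IsSeparableState ρ ∧
    qMutualInfo ρ = H2 ((1 + ‖β‖) / 2) - H2 ((1 + α) / 2) :=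
  stmt19_general n α hα₀ hα₁ U e he θ heig ρ hρ β hβ
end
end
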